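/- arXiv:1307.2205 — 14 statements merged into one kernel-verified Lean document; each statement's English description precedes it below -/
import Mathlib

section
/- Let f* be a σ-flow that is induced by vertex potentials φ* with respect to resistances r, and suppose its energy E* := E_r(f*) is strictly positive. Then: (i) for every potential vector φ : V → ℝ with σ·φ = 1 one has Σ_e (φ(head e) − φ(tail e))²/r_e ≥ 1/E*; (ii) the potentials φ̃ := φ*/E* satisfy σ·φ̃ = 1 and Σ_e (φ̃(head e) − φ̃(tail e))²/r_e = 1/E*. In particular, 1/E* equals the minimum of Σ_e (φ(head e) − φ(tail e))²/r_e over all φ with σ·φ = 1. -/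
open Finset

/-- `f` is a `σ`-flow: at each vertex, inflow minus outflow equals the demand. -/
def IsFlow {V E : Type*} [Fintype E] [DecidableEq V]
    (tail head : E → V) (σ : V → ℝ) (f : E → ℝ) : Prop :=
  ∀ v, (∑ e ∈ univ.filter (fun e => head e = v), f e)
      - (∑ e ∈ univ.filter (fun e => tail e = v), f e) = σ v

/-- Energy of a flow with respect to resistances `r`. -/
def energy {E : Type*} [Fintype E] (r f : E → ℝ) : ℝ := ∑ e, r e * f e ^ 2

/-- Lemma 2.1 (effective conductance): if `f` is a `σ`-flow induced by vertex
potentials `φstar` with respect to resistances `r` and has positive energy `E* = energy r f`,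
then (i) every potential `φ` with `σ ⬝ φ = 1` has `∑ (Δφ)²/r ≥ 1/E*`, and
(ii) `φstar / E*` attains this bound, so `1/E*` is the minimum. -/
theorem effective_conductance
    {V E : Type*} [Fintype V] [Fintype E] [DecidableEq V]
    (tail head : E → V) (σ : V → ℝ) (hσ : ∑ v, σ v = 0)
    (r : E → ℝ) (hr : ∀ e, 0 < r e)
    (f : E → ℝ) (φstar : V → ℝ)
    (hf : IsFlow tail head σ f)
    (hind : ∀ e, f e = (φstar (head e) - φstar (tail e)) / r e)
    (hE : 0 < energy r f) :
    (∀ φ : V → ℝ, (∑ v, σ v * φ v) = 1 →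
      1 / energy r f ≤ ∑ e, (φ (head e) - φ (tail e)) ^ 2 / r e) ∧
    ((∑ v, σ v * (φstar v / energy r f)) = 1 ∧
      (∑ e, (φstar (head e) / energy r f - φstar (tail e) / energy r f) ^ 2 / r e)
        = 1 / energy r f) := by
  set Est := energy r f with hEst
  -- key identity: σ · φ = ∑_e f e * (φ(head e) - φ(tail e))
  have key : ∀ φ : V → ℝ, (∑ v, σ v * φ v)
      = ∑ e, f e * (φ (head e) - φ (tail e)) := by
    intro φ
    have h1 : ∀ v, σ v * φ v
        = (∑ e ∈ univ.filter (fun e => head e = v), f e * φ (head e))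
          - (∑ e ∈ univ.filter (fun e => tail e = v), f e * φ (tail e)) := by
      intro v
      rw [← hf v, sub_mul, sum_mul, sum_mul]
      congr 1
      · exact Finset.sum_congr rfl fun e he => by
          rw [(Finset.mem_filter.1 he).2]
      · exact Finset.sum_congr rfl fun e he => by
          rw [(Finset.mem_filter.1 he).2]
    calc (∑ v, σ v * φ v)
        = (∑ v, ∑ e ∈ univ.filter (fun e => head e = v), f e * φ (head e))
          - ∑ v, ∑ e ∈ univ.filter (fun e => tail e = v), f e * φ (tail e) := by
          rw [← Finset.sum_sub_distrib]; exact Finset.sum_congr rfl fun v _ => h1 v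
      _ = (∑ e, f e * φ (head e)) - ∑ e, f e * φ (tail e) := by
          rw [Finset.sum_fiberwise, Finset.sum_fiberwise]
      _ = ∑ e, f e * (φ (head e) - φ (tail e)) := by
          rw [← Finset.sum_sub_distrib]; exact Finset.sum_congr rfl fun e _ => by ring
  -- σ · φstar = Est
  have hstar : (∑ v, σ v * φstar v) = Est := by
    rw [key, hEst, energy]
    refine Finset.sum_congr rfl fun e _ => ?_
    have := hind e
    have hre := (hr e).ne'
    have h2 : f e * r e = φstar (head e) - φstar (tail e) := by
      rw [this, div_mul_cancel₀ _ hre]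
    field_simp [this]
    linear_combination (-(f e)) * h2
  refine ⟨?_, ?_, ?_⟩
  · intro φ hφ
    have cs := Finset.sum_mul_sq_le_sq_mul_sq Finset.univ
      (fun e => Real.sqrt (r e) * f e)
      (fun e => (φ (head e) - φ (tail e)) / Real.sqrt (r e))
    have hs1 : (∑ e, (Real.sqrt (r e) * f e) * ((φ (head e) - φ (tail e)) / Real.sqrt (r e)))
        = 1 := by
      rw [← hφ, key]
      refine Finset.sum_congr rfl fun e _ => ?_
      have h0 : Real.sqrt (r e) ≠ 0 := (Real.sqrt_ne_zero'.mpr (hr e))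
      field_simp
    have hs2 : (∑ e, (Real.sqrt (r e) * f e) ^ 2) = Est := by
      rw [hEst, energy]
      refine Finset.sum_congr rfl fun e _ => ?_
      rw [mul_pow, Real.sq_sqrt (hr e).le]
    have hs3 : (∑ e, ((φ (head e) - φ (tail e)) / Real.sqrt (r e)) ^ 2)
        = ∑ e, (φ (head e) - φ (tail e)) ^ 2 / r e := by
      refine Finset.sum_congr rfl fun e _ => ?_
      rw [div_pow, Real.sq_sqrt (hr e).le]
    rw [hs1, hs2, hs3, one_pow] at cs
    rw [div_le_iff₀ hE, mul_comm]
    exact cs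
  · rw [show (∑ v, σ v * (φstar v / Est)) = (∑ v, σ v * φstar v) / Est by
      rw [Finset.sum_div]; exact Finset.sum_congr rfl fun v _ => (mul_div_assoc _ _ _).symm,
      hstar, div_self hE.ne']
  · have : (∑ e, (φstar (head e) / Est - φstar (tail e) / Est) ^ 2 / r e)
        = (∑ e, r e * f e ^ 2) / Est ^ 2 := by
      rw [Finset.sum_div]
      refine Finset.sum_congr rfl fun e _ => ?_
      have hre := (hr e).ne'
      rw [div_sub_div_same, hind e]
      field_simp
    rw [this, ← energy, ← hEst, sq, ← div_div, div_self hE.ne']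
end

section
/- (Correctness of the reduction from maximum s–t flow to perfect bipartite b-matching.) With the associated instance (Ḡ, b) built from (G, u, s, t, F): G has an integral feasible s–t flow of value F if and only if Ḡ admits an integral perfect b-matching. Moreover, G has a (fractional) feasible s–t flow of value F if and only if Ḡ admits a fractional perfect b-matching. -/
open Finset

/-- A feasible `s`-`t` flow of value `F` in a directed graph with integer capacities `u`. -/
def IsFeasibleSTFlow {V E : Type*} [Fintype E] [DecidableEq V]
    (tail head : E → V) (u : E → ℕ) (s t : V) (F : ℝ) (f : E → ℝ) : Prop :=
  (∀ e, 0 ≤ f e ∧ f e ≤ (u e : ℝ)) ∧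
  (∀ v, v ≠ s → v ≠ t →
    (∑ e ∈ univ.filter (fun e => tail e = v), f e)
      = ∑ e ∈ univ.filter (fun e => head e = v), f e) ∧
  (∑ e ∈ univ.filter (fun e => tail e = s), f e)
    - (∑ e ∈ univ.filter (fun e => head e = s), f e) = F

/-- The `P` side of the bipartition of the graph `Ḡ`: a vertex `p_e` for every arc `e`,
a vertex `p_v` for every vertex `v ∉ {s,t}`, and the vertex `p_t`. -/
abbrev RedP (V E : Type*) (s t : V) : Type _ :=
  E ⊕ ({v : V // v ≠ s ∧ v ≠ t} ⊕ Unit)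

/-- The `Q` side of the bipartition of the graph `Ḡ`: a vertex `q_e` for every arc `e`,
a vertex `q_v` for every vertex `v ∉ {s,t}`, and the vertex `q_s`. -/
abbrev RedQ (V E : Type*) (s t : V) : Type _ :=
  E ⊕ ({v : V // v ≠ s ∧ v ≠ t} ⊕ Unit)

/-- The edges of `Ḡ`: `(p_e, q_e)` for every arc `e`; `(p_v, q_v)` for `v ∉ {s,t}`;
`(q_{tail e}, p_e)` for every arc `e` (with `q_s` when `tail e = s`); and
`(q_e, p_{head e})` for every arc `e` (with `p_t` when `head e = t`). -/
abbrev RedEdge (V E : Type*) (s t : V) : Type _ :=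
  E ⊕ ({v : V // v ≠ s ∧ v ≠ t} ⊕ (E ⊕ E))

/-- The `P`-endpoint of each edge of `Ḡ`. -/
def redEdgeP {V E : Type*} [DecidableEq V] (tail head : E → V) (s t : V)
    (hns : ∀ e, head e ≠ s) : RedEdge V E s t → RedP V E s t
  | Sum.inl e => Sum.inl e
  | Sum.inr (Sum.inl v) => Sum.inr (Sum.inl v)
  | Sum.inr (Sum.inr (Sum.inl e)) => Sum.inl e
  | Sum.inr (Sum.inr (Sum.inr e)) =>
      if h : head e = t then Sum.inr (Sum.inr ())
      else Sum.inr (Sum.inl ⟨head e, hns e, h⟩)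

/-- The `Q`-endpoint of each edge of `Ḡ`. -/
def redEdgeQ {V E : Type*} [DecidableEq V] (tail head : E → V) (s t : V)
    (hnt : ∀ e, tail e ≠ t) : RedEdge V E s t → RedQ V E s t
  | Sum.inl e => Sum.inl e
  | Sum.inr (Sum.inl v) => Sum.inr (Sum.inl v)
  | Sum.inr (Sum.inr (Sum.inl e)) =>
      if h : tail e = s then Sum.inr (Sum.inr ())
      else Sum.inr (Sum.inl ⟨tail e, h, hnt e⟩)
  | Sum.inr (Sum.inr (Sum.inr e)) => Sum.inl e

/-- Demands on the `P` side: `b_{p_e} = u_e`, `b_{p_v} = Σ_{e entering v} u_e`,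
`b_{p_t} = (Σ_{e entering t} u_e) − F`. -/
def redBP {V E : Type*} [Fintype E] [DecidableEq V] (head : E → V) (u : E → ℕ)
    (s t : V) (F : ℤ) : RedP V E s t → ℤ
  | Sum.inl e => (u e : ℤ)
  | Sum.inr (Sum.inl v) => ∑ e ∈ univ.filter (fun e => head e = v.1), (u e : ℤ)
  | Sum.inr (Sum.inr _) => (∑ e ∈ univ.filter (fun e => head e = t), (u e : ℤ)) - F

/-- Demands on the `Q` side: `b_{q_e} = u_e`, `b_{q_v} = Σ_{e leaving v} u_e`,
`b_{q_s} = (Σ_{e leaving s} u_e) − F`. -/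
def redBQ {V E : Type*} [Fintype E] [DecidableEq V] (tail : E → V) (u : E → ℕ)
    (s t : V) (F : ℤ) : RedQ V E s t → ℤ
  | Sum.inl e => (u e : ℤ)
  | Sum.inr (Sum.inl v) => ∑ e ∈ univ.filter (fun e => tail e = v.1), (u e : ℤ)
  | Sum.inr (Sum.inr _) => (∑ e ∈ univ.filter (fun e => tail e = s), (u e : ℤ)) - F

/-- A (fractional) perfect `b`-matching in a bipartite graph with edge set `Ed`,
endpoint maps `eP`, `eQ`, and demands `bP`, `bQ`. -/
def IsPerfectBMatching {P Q Ed : Type*} [Fintype Ed] [DecidableEq P] [DecidableEq Q]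
    (eP : Ed → P) (eQ : Ed → Q) (bP : P → ℤ) (bQ : Q → ℤ) (x : Ed → ℝ) : Prop :=
  (∀ h, 0 ≤ x h) ∧
  (∀ p, ∑ h ∈ univ.filter (fun h => eP h = p), x h = (bP p : ℝ)) ∧
  (∀ q, ∑ h ∈ univ.filter (fun h => eQ h = q), x h = (bQ q : ℝ))


section FlowMatchingAux

variable {V E : Type*} [Fintype V] [Fintype E] [DecidableEq V] [DecidableEq E]

/-- The matching built from a flow. -/
def flowMkX (tail : E → V) (u : E → ℕ) (s t : V) (f : E → ℝ) : RedEdge V E s t → ℝ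
  | Sum.inl e => f e
  | Sum.inr (Sum.inl v) => ∑ e ∈ univ.filter (fun e => tail e = v.1), f e
  | Sum.inr (Sum.inr (Sum.inl e)) => (u e : ℝ) - f e
  | Sum.inr (Sum.inr (Sum.inr e)) => (u e : ℝ) - f e

lemma sumRedEdge (s t : V) (x : RedEdge V E s t → ℝ) (p : RedEdge V E s t → Prop)
    [DecidablePred p] :
    ∑ h ∈ univ.filter p, x h =
      (∑ e : E, if p (Sum.inl e) then x (Sum.inl e) else 0) +
      ((∑ v : {v : V // v ≠ s ∧ v ≠ t}, if p (Sum.inr (Sum.inl v)) then x (Sum.inr (Sum.inl v)) else 0) +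
       ((∑ e : E, if p (Sum.inr (Sum.inr (Sum.inl e))) then x (Sum.inr (Sum.inr (Sum.inl e))) else 0) +
        (∑ e : E, if p (Sum.inr (Sum.inr (Sum.inr e))) then x (Sum.inr (Sum.inr (Sum.inr e))) else 0))) := by
  rw [Finset.sum_filter, Fintype.sum_sum_type, Fintype.sum_sum_type, Fintype.sum_sum_type]

variable (tail head : E → V) (s t : V)

lemma sumP_inl (hns : ∀ e, head e ≠ s) (x : RedEdge V E s t → ℝ) (e0 : E) :
    ∑ h ∈ univ.filter (fun h => redEdgeP tail head s t hns h = Sum.inl e0), x h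
      = x (Sum.inl e0) + x (Sum.inr (Sum.inr (Sum.inl e0))) := by
  rw [sumRedEdge]
  have h4 : ∀ e : E,
      (if redEdgeP tail head s t hns (Sum.inr (Sum.inr (Sum.inr e))) = Sum.inl e0
        then x (Sum.inr (Sum.inr (Sum.inr e))) else 0) = 0 := by
    intro e; by_cases h : head e = t <;> simp [redEdgeP, h]
  simp only [h4]
  simp [redEdgeP, Finset.sum_ite_eq']

lemma sumP_v (hns : ∀ e, head e ≠ s) (x : RedEdge V E s t → ℝ)
    (v0 : {v : V // v ≠ s ∧ v ≠ t}) :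
    ∑ h ∈ univ.filter (fun h => redEdgeP tail head s t hns h = Sum.inr (Sum.inl v0)), x h
      = x (Sum.inr (Sum.inl v0))
        + ∑ e ∈ univ.filter (fun e => head e = v0.1), x (Sum.inr (Sum.inr (Sum.inr e))) := by
  rw [sumRedEdge]
  have h4 : ∀ e : E,
      (if redEdgeP tail head s t hns (Sum.inr (Sum.inr (Sum.inr e))) = Sum.inr (Sum.inl v0)
        then x (Sum.inr (Sum.inr (Sum.inr e))) else 0)
      = (if head e = v0.1 then x (Sum.inr (Sum.inr (Sum.inr e))) else 0) := by
    intro e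
    by_cases h : head e = t
    · have hne : t ≠ v0.1 := fun hh => v0.2.2 hh.symm
      simp [redEdgeP, h, hne]
    · simp [redEdgeP, h, Subtype.ext_iff]
  simp only [h4]
  simp [redEdgeP, Finset.sum_ite_eq', Finset.sum_filter]

lemma sumP_t (hns : ∀ e, head e ≠ s) (x : RedEdge V E s t → ℝ) :
    ∑ h ∈ univ.filter (fun h => redEdgeP tail head s t hns h = Sum.inr (Sum.inr ())), x h
      = ∑ e ∈ univ.filter (fun e => head e = t), x (Sum.inr (Sum.inr (Sum.inr e))) := by
  rw [sumRedEdge]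
  have h4 : ∀ e : E,
      (if redEdgeP tail head s t hns (Sum.inr (Sum.inr (Sum.inr e))) = Sum.inr (Sum.inr ())
        then x (Sum.inr (Sum.inr (Sum.inr e))) else 0)
      = (if head e = t then x (Sum.inr (Sum.inr (Sum.inr e))) else 0) := by
    intro e; by_cases h : head e = t <;> simp [redEdgeP, h]
  simp only [h4]
  simp [redEdgeP, Finset.sum_filter]

lemma sumQ_inl (hnt : ∀ e, tail e ≠ t) (x : RedEdge V E s t → ℝ) (e0 : E) :
    ∑ h ∈ univ.filter (fun h => redEdgeQ tail head s t hnt h = Sum.inl e0), x h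
      = x (Sum.inl e0) + x (Sum.inr (Sum.inr (Sum.inr e0))) := by
  rw [sumRedEdge]
  have h3 : ∀ e : E,
      (if redEdgeQ tail head s t hnt (Sum.inr (Sum.inr (Sum.inl e))) = Sum.inl e0
        then x (Sum.inr (Sum.inr (Sum.inl e))) else 0) = 0 := by
    intro e; by_cases h : tail e = s <;> simp [redEdgeQ, h]
  simp only [h3]
  simp [redEdgeQ, Finset.sum_ite_eq']

lemma sumQ_v (hnt : ∀ e, tail e ≠ t) (x : RedEdge V E s t → ℝ)
    (v0 : {v : V // v ≠ s ∧ v ≠ t}) :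
    ∑ h ∈ univ.filter (fun h => redEdgeQ tail head s t hnt h = Sum.inr (Sum.inl v0)), x h
      = x (Sum.inr (Sum.inl v0))
        + ∑ e ∈ univ.filter (fun e => tail e = v0.1), x (Sum.inr (Sum.inr (Sum.inl e))) := by
  rw [sumRedEdge]
  have h3 : ∀ e : E,
      (if redEdgeQ tail head s t hnt (Sum.inr (Sum.inr (Sum.inl e))) = Sum.inr (Sum.inl v0)
        then x (Sum.inr (Sum.inr (Sum.inl e))) else 0)
      = (if tail e = v0.1 then x (Sum.inr (Sum.inr (Sum.inl e))) else 0) := by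
    intro e
    by_cases h : tail e = s
    · have hne : s ≠ v0.1 := fun hh => v0.2.1 hh.symm
      simp [redEdgeQ, h, hne]
    · simp [redEdgeQ, h, Subtype.ext_iff]
  simp only [h3]
  simp [redEdgeQ, Finset.sum_ite_eq', Finset.sum_filter]

lemma sumQ_s (hnt : ∀ e, tail e ≠ t) (x : RedEdge V E s t → ℝ) :
    ∑ h ∈ univ.filter (fun h => redEdgeQ tail head s t hnt h = Sum.inr (Sum.inr ())), x h
      = ∑ e ∈ univ.filter (fun e => tail e = s), x (Sum.inr (Sum.inr (Sum.inl e))) := by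
  rw [sumRedEdge]
  have h3 : ∀ e : E,
      (if redEdgeQ tail head s t hnt (Sum.inr (Sum.inr (Sum.inl e))) = Sum.inr (Sum.inr ())
        then x (Sum.inr (Sum.inr (Sum.inl e))) else 0)
      = (if tail e = s then x (Sum.inr (Sum.inr (Sum.inl e))) else 0) := by
    intro e; by_cases h : tail e = s <;> simp [redEdgeQ, h]
  simp only [h3]
  simp [redEdgeQ, Finset.sum_filter]

lemma flow_forward (hst : s ≠ t) (hns : ∀ e, head e ≠ s) (hnt : ∀ e, tail e ≠ t)
    (u : E → ℕ) (F : ℤ) (f : E → ℝ)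
    (hf : IsFeasibleSTFlow tail head u s t (F : ℝ) f) :
    IsPerfectBMatching (redEdgeP tail head s t hns) (redEdgeQ tail head s t hnt)
      (redBP head u s t F) (redBQ tail u s t F) (flowMkX tail u s t f) := by
  obtain ⟨hcap, hcons, hval⟩ := hf
  have hheads : ∑ e ∈ univ.filter (fun e => head e = s), f e = 0 :=
    Finset.sum_eq_zero (fun e he => absurd (Finset.mem_filter.1 he).2 (hns e))
  have htailt : ∑ e ∈ univ.filter (fun e => tail e = t), f e = 0 :=
    Finset.sum_eq_zero (fun e he => absurd (Finset.mem_filter.1 he).2 (hnt e))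
  have hFs : ∑ e ∈ univ.filter (fun e => tail e = s), f e = (F : ℝ) := by
    rw [hheads] at hval; linarith
  have hFt : ∑ e ∈ univ.filter (fun e => head e = t), f e = (F : ℝ) := by
    have h1 : ∑ v : V, ((∑ e ∈ univ.filter (fun e => tail e = v), f e)
        - ∑ e ∈ univ.filter (fun e => head e = v), f e) = 0 := by
      rw [Finset.sum_sub_distrib, Finset.sum_fiberwise, Finset.sum_fiberwise, sub_self]
    have h2 : ∑ v ∈ ({s, t} : Finset V), ((∑ e ∈ univ.filter (fun e => tail e = v), f e)
        - ∑ e ∈ univ.filter (fun e => head e = v), f e) = 0 := by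
      rw [Finset.sum_subset (Finset.subset_univ _) (fun v _ hv => by
        simp only [Finset.mem_insert, Finset.mem_singleton, not_or] at hv
        rw [hcons v hv.1 hv.2, sub_self]), h1]
    rw [Finset.sum_pair hst, hheads, htailt] at h2
    linarith
  refine ⟨?_, ?_, ?_⟩
  · rintro (e | v | e | e)
    · exact (hcap e).1
    · exact Finset.sum_nonneg (fun e _ => (hcap e).1)
    · simpa [flowMkX] using (hcap e).2
    · simpa [flowMkX] using (hcap e).2
  · rintro (e | v | ⟨⟩)
    · rw [sumP_inl]
      simp [flowMkX, redBP]
    · rw [sumP_v]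
      have : ∑ e ∈ univ.filter (fun e => head e = v.1),
          flowMkX tail u s t f (Sum.inr (Sum.inr (Sum.inr e)))
          = ∑ e ∈ univ.filter (fun e => head e = v.1), ((u e : ℝ) - f e) := rfl
      rw [this, Finset.sum_sub_distrib]
      show (∑ e ∈ univ.filter (fun e => tail e = v.1), f e) + _ = _
      rw [hcons v.1 v.2.1 v.2.2]
      simp [redBP]
    · rw [sumP_t]
      have : ∑ e ∈ univ.filter (fun e => head e = t),
          flowMkX tail u s t f (Sum.inr (Sum.inr (Sum.inr e)))
          = ∑ e ∈ univ.filter (fun e => head e = t), ((u e : ℝ) - f e) := rfl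
      rw [this, Finset.sum_sub_distrib, hFt]
      simp [redBP]
  · rintro (e | v | ⟨⟩)
    · rw [sumQ_inl]
      simp [flowMkX, redBQ]
    · rw [sumQ_v]
      have : ∑ e ∈ univ.filter (fun e => tail e = v.1),
          flowMkX tail u s t f (Sum.inr (Sum.inr (Sum.inl e)))
          = ∑ e ∈ univ.filter (fun e => tail e = v.1), ((u e : ℝ) - f e) := rfl
      rw [this, Finset.sum_sub_distrib]
      show (∑ e ∈ univ.filter (fun e => tail e = v.1), f e) + _ = _
      simp [redBQ]
    · rw [sumQ_s]
      have : ∑ e ∈ univ.filter (fun e => tail e = s),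
          flowMkX tail u s t f (Sum.inr (Sum.inr (Sum.inl e)))
          = ∑ e ∈ univ.filter (fun e => tail e = s), ((u e : ℝ) - f e) := rfl
      rw [this, Finset.sum_sub_distrib, hFs]
      simp [redBQ]

lemma flow_backward (hns : ∀ e, head e ≠ s) (hnt : ∀ e, tail e ≠ t)
    (u : E → ℕ) (F : ℤ) (x : RedEdge V E s t → ℝ)
    (hx : IsPerfectBMatching (redEdgeP tail head s t hns) (redEdgeQ tail head s t hnt)
      (redBP head u s t F) (redBQ tail u s t F) x) :
    IsFeasibleSTFlow tail head u s t (F : ℝ) (fun e => x (Sum.inl e)) := by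
  obtain ⟨hpos, hP, hQ⟩ := hx
  have hein : ∀ e : E, x (Sum.inr (Sum.inr (Sum.inl e))) = (u e : ℝ) - x (Sum.inl e) := by
    intro e
    have := hP (Sum.inl e)
    rw [sumP_inl] at this
    simp only [redBP] at this
    push_cast at this
    linarith
  have heout : ∀ e : E, x (Sum.inr (Sum.inr (Sum.inr e))) = (u e : ℝ) - x (Sum.inl e) := by
    intro e
    have := hQ (Sum.inl e)
    rw [sumQ_inl] at this
    simp only [redBQ] at this
    push_cast at this
    linarith
  refine ⟨?_, ?_, ?_⟩
  · intro e
    refine ⟨hpos _, ?_⟩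
    have := hpos (Sum.inr (Sum.inr (Sum.inl e)))
    rw [hein] at this
    linarith
  · intro v hv1 hv2
    have hPv := hP (Sum.inr (Sum.inl ⟨v, hv1, hv2⟩))
    have hQv := hQ (Sum.inr (Sum.inl ⟨v, hv1, hv2⟩))
    rw [sumP_v] at hPv
    rw [sumQ_v] at hQv
    simp only [redBP] at hPv
    simp only [redBQ] at hQv
    rw [Finset.sum_congr rfl (fun e _ => heout e)] at hPv
    rw [Finset.sum_congr rfl (fun e _ => hein e)] at hQv
    rw [Finset.sum_sub_distrib] at hPv hQv
    push_cast at hPv hQv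
    linarith
  · have hQs := hQ (Sum.inr (Sum.inr ()))
    rw [sumQ_s] at hQs
    simp only [redBQ] at hQs
    rw [Finset.sum_congr rfl (fun e _ => hein e), Finset.sum_sub_distrib] at hQs
    push_cast at hQs
    have hheads : ∑ e ∈ univ.filter (fun e => head e = s), x (Sum.inl e) = 0 :=
      Finset.sum_eq_zero (fun e he => absurd (Finset.mem_filter.1 he).2 (hns e))
    rw [hheads]
    linarith

lemma sum_nat_exists {α : Type*} (s : Finset α) (g : α → ℝ) (n : α → ℕ)
    (hn : ∀ a, g a = n a) : ∃ m : ℕ, ∑ a ∈ s, g a = m := by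
  refine ⟨∑ a ∈ s, n a, ?_⟩
  push_cast
  exact Finset.sum_congr rfl (fun a _ => hn a)

end FlowMatchingAux

/-- Correctness of the reduction from maximum `s`-`t` flow to perfect bipartite
`b`-matching: `G` has an integral (resp. fractional) feasible `s`-`t` flow of value `F`
iff `Ḡ` admits an integral (resp. fractional) perfect `b`-matching. -/
theorem flow_to_matching_reduction_correct
    {V E : Type*} [Fintype V] [Fintype E] [DecidableEq V] [DecidableEq E]
    (tail head : E → V) (u : E → ℕ) (s t : V) (hst : s ≠ t)
    (hns : ∀ e, head e ≠ s) (hnt : ∀ e, tail e ≠ t)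
    (hu : ∀ e, 1 ≤ u e) (F : ℤ) (hF0 : 0 ≤ F)
    (hFs : F ≤ ∑ e ∈ univ.filter (fun e => tail e = s), (u e : ℤ))
    (hFt : F ≤ ∑ e ∈ univ.filter (fun e => head e = t), (u e : ℤ)) :
    ((∃ f : E → ℝ, IsFeasibleSTFlow tail head u s t (F : ℝ) f ∧ ∀ e, ∃ n : ℕ, f e = n) ↔
      (∃ x : RedEdge V E s t → ℝ,
        IsPerfectBMatching (redEdgeP tail head s t hns) (redEdgeQ tail head s t hnt)
          (redBP head u s t F) (redBQ tail u s t F) x ∧ ∀ h, ∃ n : ℕ, x h = n)) ∧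
    ((∃ f : E → ℝ, IsFeasibleSTFlow tail head u s t (F : ℝ) f) ↔
      (∃ x : RedEdge V E s t → ℝ,
        IsPerfectBMatching (redEdgeP tail head s t hns) (redEdgeQ tail head s t hnt)
          (redBP head u s t F) (redBQ tail u s t F) x)) := by
  have fwd : ∀ f : E → ℝ, IsFeasibleSTFlow tail head u s t (F : ℝ) f →
      IsPerfectBMatching (redEdgeP tail head s t hns) (redEdgeQ tail head s t hnt)
        (redBP head u s t F) (redBQ tail u s t F) (flowMkX tail u s t f) :=
    fun f hf => flow_forward tail head s t hst hns hnt u F f hf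
  constructor
  · constructor
    · rintro ⟨f, hf, hint⟩
      refine ⟨flowMkX tail u s t f, fwd f hf, ?_⟩
      choose n hn using hint
      have hle : ∀ e, n e ≤ u e := by
        intro e
        have := (hf.1 e).2
        rw [hn e] at this
        exact_mod_cast this
      rintro (e | v | e | e)
      · exact ⟨n e, hn e⟩
      · exact sum_nat_exists _ _ n hn
      · refine ⟨u e - n e, ?_⟩
        show (u e : ℝ) - f e = _
        rw [hn e]
        push_cast [Nat.cast_sub (hle e)]
        ring
      · refine ⟨u e - n e, ?_⟩
        show (u e : ℝ) - f e = _
        rw [hn e]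
        push_cast [Nat.cast_sub (hle e)]
        ring
    · rintro ⟨x, hx, hint⟩
      exact ⟨fun e => x (Sum.inl e), flow_backward tail head s t hns hnt u F x hx,
        fun e => hint (Sum.inl e)⟩
  · constructor
    · rintro ⟨f, hf⟩
      exact ⟨flowMkX tail u s t f, fwd f hf⟩
    · rintro ⟨x, hx⟩
      exact ⟨fun e => x (Sum.inl e), flow_backward tail head s t hns hnt u F x hx⟩
end

section
/- (Balancedness of the reduction.) For the associated instance (Ḡ, b) built from (G, u, s, t, F), one has Σ_{h ∈ Ē} d(h) ≤ 4 Σ_v b_v, where for an edge h = (p, q) of Ḡ its thickness is d(h) := min(b_p, b_q). -/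
open Finset

/-- Balancedness of the reduction: the total thickness `Σ_h min(b_{P-endpoint}, b_{Q-endpoint})`
of the edges of `Ḡ` is at most `4` times the total demand `Σ_v b_v`. -/
theorem flow_to_matching_reduction_balanced
    {V E : Type*} [Fintype V] [Fintype E] [DecidableEq V] [DecidableEq E]
    (tail head : E → V) (u : E → ℕ) (s t : V) (hst : s ≠ t)
    (hns : ∀ e, head e ≠ s) (hnt : ∀ e, tail e ≠ t)
    (hu : ∀ e, 1 ≤ u e) (F : ℤ) (hF0 : 0 ≤ F)
    (hFs : F ≤ ∑ e ∈ univ.filter (fun e => tail e = s), (u e : ℤ))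
    (hFt : F ≤ ∑ e ∈ univ.filter (fun e => head e = t), (u e : ℤ)) :
    (∑ h : RedEdge V E s t,
        min (redBP head u s t F (redEdgeP tail head s t hns h))
            (redBQ tail u s t F (redEdgeQ tail head s t hnt h)))
      ≤ 4 * ((∑ p : RedP V E s t, redBP head u s t F p)
              + (∑ q : RedQ V E s t, redBQ tail u s t F q)) := by
  classical
  have hU : (0:ℤ) ≤ ∑ e : E, (u e : ℤ) :=
    Finset.sum_nonneg fun e _ => by positivity
  have hSp : (0:ℤ) ≤ ∑ v : {v : V // v ≠ s ∧ v ≠ t},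
      ∑ e ∈ univ.filter (fun e => head e = v.1), (u e : ℤ) :=
    Finset.sum_nonneg fun v _ => Finset.sum_nonneg fun e _ => by positivity
  have hSq : (0:ℤ) ≤ ∑ v : {v : V // v ≠ s ∧ v ≠ t},
      ∑ e ∈ univ.filter (fun e => tail e = v.1), (u e : ℤ) :=
    Finset.sum_nonneg fun v _ => Finset.sum_nonneg fun e _ => by positivity
  simp only [Fintype.sum_sum_type, redEdgeP, redEdgeQ, redBP, redBQ, min_self,
    Finset.univ_unique, Finset.sum_singleton]
  have h2 : ∑ v : {v : V // v ≠ s ∧ v ≠ t},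
      min (∑ e ∈ univ.filter (fun e => head e = v.1), (u e : ℤ))
          (∑ e ∈ univ.filter (fun e => tail e = v.1), (u e : ℤ))
      ≤ ∑ v : {v : V // v ≠ s ∧ v ≠ t},
        ∑ e ∈ univ.filter (fun e => head e = v.1), (u e : ℤ) :=
    Finset.sum_le_sum fun v _ => min_le_left _ _
  have h3 : ∀ e : E,
      min (redBP head u s t F (Sum.inl e))
        (redBQ tail u s t F (redEdgeQ tail head s t hnt (Sum.inr (Sum.inr (Sum.inl e)))))
      ≤ (u e : ℤ) := fun e => min_le_left _ _
  have h4 : ∀ e : E,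
      min (redBP head u s t F (redEdgeP tail head s t hns (Sum.inr (Sum.inr (Sum.inr e)))))
        (redBQ tail u s t F (Sum.inl e)) ≤ (u e : ℤ) := fun e => min_le_right _ _
  have h3' := Finset.sum_le_sum (fun e (_ : e ∈ univ) => h3 e)
  have h4' := Finset.sum_le_sum (fun e (_ : e ∈ univ) => h4 e)
  simp only [redEdgeP, redEdgeQ, redBP, redBQ] at h3' h4'
  linarith
end

section
/- (Rounding fractional bipartite b-matchings.) Let G = (P ∪ Q, E) be a finite undirected bipartite graph with integer demands b_v ≥ 1. If x is a fractional b-matching in G of size k = Σ_e x_e, then there exists an integral b-matching x* in G of size exactly ⌊k⌋. -/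
open Finset


/-- Reduce a natural-valued function pointwise to achieve any smaller total sum. -/
lemma exists_le_sum_eq {α : Type*} [Fintype α] [DecidableEq α] :
    ∀ (d : ℕ) (y : α → ℕ) (N : ℕ), (∑ a, y a) = N + d →
      ∃ y' : α → ℕ, (∀ a, y' a ≤ y a) ∧ ∑ a, y' a = N := by
  intro d
  induction d with
  | zero => intro y N h; exact ⟨y, fun a => le_rfl, by simpa using h⟩
  | succ d ih =>
    intro y N h
    have hpos : 0 < ∑ a, y a := by omega
    obtain ⟨a0, -, ha0⟩ : ∃ a ∈ univ, y a ≠ 0 := by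
      by_contra hc
      push_neg at hc
      have : ∑ a, y a = 0 := Finset.sum_eq_zero fun a ha => hc a ha
      omega
    set y1 : α → ℕ := Function.update y a0 (y a0 - 1) with hy1
    have hs : ∑ a, y1 a = N + d := by
      rw [hy1, Finset.sum_update_of_mem (mem_univ a0)]
      have h2 : ∑ a ∈ univ \ {a0}, y a = (∑ a, y a) - y a0 := by
        rw [Finset.sdiff_singleton_eq_erase, ← Finset.sum_erase_add univ y (mem_univ a0)]; omega
      have h3 : y a0 ≤ ∑ a, y a := Finset.single_le_sum (f := y) (fun a _ => Nat.zero_le _) (mem_univ a0)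
      rw [h2]; omega
    obtain ⟨y', hle, hsum⟩ := ih y1 N hs
    refine ⟨y', fun a => (hle a).trans ?_, hsum⟩
    rw [hy1]
    rcases eq_or_ne a a0 with rfl | hne
    · simp only [Function.update_self]; omega
    · simp [Function.update_of_ne hne]

section Main
variable {P Q Ed : Type*} [Fintype P] [Fintype Q] [Fintype Ed]
    [DecidableEq P] [DecidableEq Q]
    (eP : Ed → P) (eQ : Ed → Q) (bP : P → ℕ) (bQ : Q → ℕ)

set_option linter.unusedSectionVars false

noncomputable def nbr (p : P) : Finset Q := (univ.filter (fun h => eP h = p)).image eQ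

variable {P Q Ed : Type*} [Fintype P] [Fintype Q] [Fintype Ed]
    [DecidableEq P] [DecidableEq Q]
    (eP : Ed → P) (eQ : Ed → Q) (bP : P → ℕ) (bQ : Q → ℕ)

/-- key duality inequality -/
lemma key_ineq (x : Ed → ℝ) (hx0 : ∀ h, 0 ≤ x h)
    (hxP : ∀ p, (∑ h ∈ univ.filter (fun h => eP h = p), x h) ≤ (bP p : ℝ))
    (hxQ : ∀ q, (∑ h ∈ univ.filter (fun h => eQ h = q), x h) ≤ (bQ q : ℝ))
    (T : Finset P) :
    (∑ h, x h) ≤ (∑ q ∈ T.biUnion (nbr eP eQ), (bQ q : ℝ)) + ∑ p ∈ Tᶜ, (bP p : ℝ) := by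
  classical
  have hsplit : (∑ h, x h) =
      (∑ h ∈ univ.filter (fun h => eP h ∈ T), x h) +
      (∑ h ∈ univ.filter (fun h => ¬ (eP h ∈ T)), x h) :=
    (Finset.sum_filter_add_sum_filter_not univ _ x).symm
  have hB : (∑ h ∈ univ.filter (fun h => ¬ (eP h ∈ T)), x h) ≤ ∑ p ∈ Tᶜ, (bP p : ℝ) := by
    have h1 : (∑ p ∈ Tᶜ, ∑ h ∈ univ.filter (fun h => eP h = p), x h)
        = ∑ h ∈ univ.filter (fun h => eP h ∈ Tᶜ), x h :=
      Finset.sum_fiberwise_eq_sum_filter univ Tᶜ eP x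
    have h2 : (univ.filter (fun h => eP h ∈ Tᶜ)) = univ.filter (fun h => ¬ (eP h ∈ T)) := by
      simp [Finset.mem_compl]
    rw [← h2, ← h1]
    exact Finset.sum_le_sum (fun p _ => hxP p)
  have hA : (∑ h ∈ univ.filter (fun h => eP h ∈ T), x h)
      ≤ ∑ q ∈ T.biUnion (nbr eP eQ), (bQ q : ℝ) := by
    have hsub : (univ.filter (fun h => eP h ∈ T)) ⊆
        (univ.filter (fun h => eQ h ∈ T.biUnion (nbr eP eQ))) := by
      intro h hh
      simp only [mem_filter, mem_univ, true_and] at hh ⊢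
      exact Finset.mem_biUnion.mpr ⟨eP h, hh, by
        simp [nbr, Finset.mem_image]
        exact ⟨h, rfl, rfl⟩⟩
    have h1 : (∑ h ∈ univ.filter (fun h => eP h ∈ T), x h)
        ≤ ∑ h ∈ univ.filter (fun h => eQ h ∈ T.biUnion (nbr eP eQ)), x h :=
      Finset.sum_le_sum_of_subset_of_nonneg hsub (fun h _ _ => hx0 h)
    have h2 : (∑ q ∈ T.biUnion (nbr eP eQ), ∑ h ∈ univ.filter (fun h => eQ h = q), x h)
        = ∑ h ∈ univ.filter (fun h => eQ h ∈ T.biUnion (nbr eP eQ)), x h :=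
      Finset.sum_fiberwise_eq_sum_filter univ _ eQ x
    rw [← h2] at h1
    exact h1.trans (Finset.sum_le_sum (fun q _ => hxQ q))
  rw [hsplit]
  exact add_le_add hA hB





/-- Hall condition holds for the replicated bipartite graph. -/
lemma hall_cond (d : ℕ)
    (hkey : ∀ T : Finset P, (∑ p ∈ T, bP p) ≤ (∑ q ∈ T.biUnion (nbr eP eQ), bQ q) + d)
    (S : Finset (Σ p : P, Fin (bP p))) :
    S.card ≤ (S.biUnion (fun a =>
      (((nbr eP eQ a.1).sigma (fun q => (univ : Finset (Fin (bQ q))))).disjSum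
        (univ : Finset (Fin d))))).card := by
  classical
  rcases S.eq_empty_or_nonempty with rfl | hS
  · simp
  set T := S.image Sigma.fst with hT
  have hbu : S.biUnion (fun a =>
      (((nbr eP eQ a.1).sigma (fun q => (univ : Finset (Fin (bQ q))))).disjSum
        (univ : Finset (Fin d))))
      = ((T.biUnion (nbr eP eQ)).sigma (fun q => (univ : Finset (Fin (bQ q))))).disjSum
        (univ : Finset (Fin d)) := by
    ext b
    cases b with
    | inl b =>
      simp only [mem_biUnion, inl_mem_disjSum, mem_sigma, mem_univ, and_true, hT,
        Finset.mem_image]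
      constructor
      · rintro ⟨a, haS, hb⟩; exact ⟨a.1, ⟨a, haS, rfl⟩, hb⟩
      · rintro ⟨p, ⟨a, haS, rfl⟩, hb⟩; exact ⟨a, haS, hb⟩
    | inr j =>
      simp only [mem_biUnion, inr_mem_disjSum, mem_univ, iff_true]
      exact ⟨hS.choose, hS.choose_spec, trivial⟩
  rw [hbu, Finset.card_disjSum, Finset.card_sigma]
  have hScard : S.card ≤ ∑ p ∈ T, bP p := by
    have hsub : S ⊆ T.sigma (fun p => (univ : Finset (Fin (bP p)))) := by
      intro a haS
      exact Finset.mem_sigma.mpr ⟨Finset.mem_image_of_mem _ haS, mem_univ _⟩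
    calc S.card ≤ (T.sigma (fun p => (univ : Finset (Fin (bP p))))).card :=
          Finset.card_le_card hsub
      _ = ∑ p ∈ T, bP p := by rw [Finset.card_sigma]; simp
  simp only [Finset.card_univ, Fintype.card_fin]
  exact hScard.trans (hkey T)





/-- From a Hall matching on the replicated graph, build an integral b-matching. -/
lemma build_y (d : ℕ)
    (f : (Σ p : P, Fin (bP p)) → (Σ q : Q, Fin (bQ q)) ⊕ Fin d)
    (hfinj : Function.Injective f)
    (hft : ∀ a, f a ∈ (((nbr eP eQ a.1).sigma (fun q => (univ : Finset (Fin (bQ q))))).disjSum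
        (univ : Finset (Fin d)))) :
    ∃ y0 : Ed → ℕ,
      (∀ p, (∑ h ∈ univ.filter (fun h => eP h = p), y0 h) ≤ bP p) ∧
      (∀ q, (∑ h ∈ univ.filter (fun h => eQ h = q), y0 h) ≤ bQ q) ∧
      (∑ p, bP p) - d ≤ ∑ h, y0 h := by
  classical
  -- the partial edge-assignment
  set g : (Σ p : P, Fin (bP p)) → Option Ed := fun a => Sum.elim
    (fun (b : Σ q : Q, Fin (bQ q)) =>
      if hpq : ∃ h, eP h = a.1 ∧ eQ h = b.1 then some hpq.choose else none)
    (fun _ => none) (f a) with hg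
  -- basic property of g
  have hg1 : ∀ a (h : Ed), g a = some h →
      eP h = a.1 ∧ ∃ b : (Σ q : Q, Fin (bQ q)), f a = Sum.inl b ∧ b.1 = eQ h := by
    intro a h hgh
    simp only [hg] at hgh
    cases hfa : f a with
    | inl b =>
      rw [hfa, Sum.elim_inl] at hgh
      split_ifs at hgh with hpq
      · obtain ⟨he1, he2⟩ := hpq.choose_spec
        have hch : hpq.choose = h := by injection hgh
        rw [hch] at he1 he2
        exact ⟨he1, ⟨b, rfl, he2.symm⟩⟩
    | inr j => rw [hfa, Sum.elim_inr] at hgh; exact absurd hgh (by simp)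
  have hg2 : ∀ a (b : Σ q : Q, Fin (bQ q)), f a = Sum.inl b → ∃ h, g a = some h := by
    intro a b hfa
    have hmem := hft a
    rw [hfa, Finset.inl_mem_disjSum, Finset.mem_sigma] at hmem
    have hb1 : b.1 ∈ nbr eP eQ a.1 := hmem.1
    rw [nbr, Finset.mem_image] at hb1
    obtain ⟨h, hh, hhq⟩ := hb1
    rw [mem_filter] at hh
    have hpq : ∃ h, eP h = a.1 ∧ eQ h = b.1 := ⟨h, hh.2, hhq⟩
    refine ⟨hpq.choose, ?_⟩
    simp only [hg]
    rw [hfa, Sum.elim_inl, dif_pos hpq]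
  set y0 : Ed → ℕ :=
    fun h => (univ.filter (fun a : Σ p : P, Fin (bP p) => g a = some h)).card with hy0
  have hdisj : ∀ (F : Finset Ed), ∑ h ∈ F, y0 h =
      (F.biUnion (fun h => univ.filter (fun a : Σ p : P, Fin (bP p) => g a = some h))).card := by
    intro F
    rw [Finset.card_biUnion]
    intro h1 _ h2 _ hne
    simp only [Finset.disjoint_left, mem_filter, mem_univ, true_and]
    intro a ha1 ha2
    rw [ha1] at ha2
    exact hne (by injection ha2)
  refine ⟨y0, ?_, ?_, ?_⟩
  · -- P constraint
    intro p
    rw [hdisj]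
    have hsub : ((univ.filter (fun h => eP h = p)).biUnion
        (fun h => univ.filter (fun a : Σ p : P, Fin (bP p) => g a = some h)))
        ⊆ univ.filter (fun a : Σ p : P, Fin (bP p) => a.1 = p) := by
      intro a ha
      rw [Finset.mem_biUnion] at ha
      obtain ⟨h, hh, hah⟩ := ha
      rw [mem_filter] at hh hah ⊢
      exact ⟨mem_univ _, ((hg1 a h hah.2).1).symm.trans hh.2⟩
    have hcard : (univ.filter (fun a : Σ p : P, Fin (bP p) => a.1 = p)).card = bP p := by
      have heq : (univ.filter (fun a : Σ p : P, Fin (bP p) => a.1 = p)) =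
          univ.map ⟨fun (j : Fin (bP p)) => (⟨p, j⟩ : Σ p : P, Fin (bP p)), fun j j' hjj =>
            sigma_mk_injective (by simpa using hjj)⟩ := by
        ext a
        simp only [mem_filter, mem_univ, true_and, Finset.mem_map,
          Function.Embedding.coeFn_mk]
        constructor
        · rintro rfl; exact ⟨a.2, rfl⟩
        · rintro ⟨j, rfl⟩; rfl
      rw [heq, Finset.card_map, Finset.card_univ, Fintype.card_fin]
    rw [← hcard]
    exact Finset.card_le_card hsub
  · -- Q constraint
    intro q
    rw [hdisj]
    set Sq := ((univ.filter (fun h => eQ h = q)).biUnion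
        (fun h => univ.filter (fun a : Σ p : P, Fin (bP p) => g a = some h))) with hSq
    have hcard : Sq.card = (Sq.image f).card := (Finset.card_image_of_injOn
      (hfinj.injOn)).symm
    have hsub : Sq.image f ⊆ univ.map
        ⟨fun (j : Fin (bQ q)) => (Sum.inl ⟨q, j⟩ : (Σ q : Q, Fin (bQ q)) ⊕ Fin d),
        fun j j' hjj => sigma_mk_injective (by simpa using hjj)⟩ := by
      intro b hb
      rw [Finset.mem_image] at hb
      obtain ⟨a, haSq, rfl⟩ := hb
      rw [hSq, Finset.mem_biUnion] at haSq
      obtain ⟨h, hh, hah⟩ := haSq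
      rw [mem_filter] at hh hah
      obtain ⟨-, bb, hfb, hbq⟩ := hg1 a h hah.2
      obtain ⟨q', j⟩ := bb
      have hq' : q' = q := hbq.trans hh.2
      subst hq'
      rw [hfb]
      simp only [Finset.mem_map, Function.Embedding.coeFn_mk]
      exact ⟨j, mem_univ _, rfl⟩
    calc Sq.card = (Sq.image f).card := hcard
      _ ≤ _ := Finset.card_le_card hsub
      _ = bQ q := by simp
  · -- total size lower bound
    have htot : ∑ h, y0 h =
        (univ.filter (fun a : Σ p : P, Fin (bP p) => ∃ h, g a = some h)).card := by
      rw [hdisj]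
      congr 1
      ext a
      simp only [Finset.mem_biUnion, mem_filter, mem_univ, true_and]
    have hsubinl : (univ.filter (fun a : Σ p : P, Fin (bP p) =>
          ∃ b : Σ q : Q, Fin (bQ q), f a = Sum.inl b))
        ⊆ (univ.filter (fun a : Σ p : P, Fin (bP p) => ∃ h, g a = some h)) := by
      intro a ha
      rw [mem_filter] at ha ⊢
      obtain ⟨-, b, hb⟩ := ha
      exact ⟨mem_univ _, hg2 a b hb⟩
    have hpartition :
        (univ.filter (fun a : Σ p : P, Fin (bP p) =>
          ∃ b : Σ q : Q, Fin (bQ q), f a = Sum.inl b)).card +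
        (univ.filter (fun a : Σ p : P, Fin (bP p) =>
          ¬ ∃ b : Σ q : Q, Fin (bQ q), f a = Sum.inl b)).card
        = Fintype.card (Σ p : P, Fin (bP p)) :=
      Finset.card_filter_add_card_filter_not _
    have hinr : (univ.filter (fun a : Σ p : P, Fin (bP p) =>
        ¬ ∃ b : Σ q : Q, Fin (bQ q), f a = Sum.inl b)).card ≤ d := by
      set Sr := (univ.filter (fun a : Σ p : P, Fin (bP p) =>
        ¬ ∃ b : Σ q : Q, Fin (bQ q), f a = Sum.inl b)) with hSr
      have hcard : Sr.card = (Sr.image f).card := (Finset.card_image_of_injOn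
        (hfinj.injOn)).symm
      have hsub : Sr.image f ⊆ univ.map
          ⟨fun (j : Fin d) => (Sum.inr j : (Σ q : Q, Fin (bQ q)) ⊕ Fin d),
          fun j j' hjj => by simpa using hjj⟩ := by
        intro b hb
        rw [Finset.mem_image] at hb
        obtain ⟨a, haSr, rfl⟩ := hb
        rw [hSr, mem_filter] at haSr
        cases hfa : f a with
        | inl bb => exact absurd ⟨bb, hfa⟩ haSr.2
        | inr j =>
          simp only [Finset.mem_map, Function.Embedding.coeFn_mk]
          exact ⟨j, mem_univ _, rfl⟩
      calc Sr.card = (Sr.image f).card := hcard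
        _ ≤ _ := Finset.card_le_card hsub
        _ = d := by simp
    have hcardA : Fintype.card (Σ p : P, Fin (bP p)) = ∑ p, bP p := by
      rw [Fintype.card_sigma]; simp
    rw [htot]
    have hlec := Finset.card_le_card hsubinl
    omega


end Main


/-- Theorem 3.4 (rounding fractional bipartite `b`-matchings): given a fractional
`b`-matching `x` of size `k` in a bipartite graph (edges `Ed`, endpoint maps `eP`, `eQ`,
integer demands `bP ≥ 1`, `bQ ≥ 1`), there is an integral `b`-matching of size exactly `⌊k⌋`. -/
theorem rounding_bipartite_bmatchings
    {P Q Ed : Type*} [Fintype P] [Fintype Q] [Fintype Ed]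
    [DecidableEq P] [DecidableEq Q]
    (eP : Ed → P) (eQ : Ed → Q) (bP : P → ℕ) (bQ : Q → ℕ)
    (hbP : ∀ p, 1 ≤ bP p) (hbQ : ∀ q, 1 ≤ bQ q)
    (x : Ed → ℝ) (hx0 : ∀ h, 0 ≤ x h)
    (hxP : ∀ p, (∑ h ∈ univ.filter (fun h => eP h = p), x h) ≤ (bP p : ℝ))
    (hxQ : ∀ q, (∑ h ∈ univ.filter (fun h => eQ h = q), x h) ≤ (bQ q : ℝ)) :
    ∃ y : Ed → ℕ,
      (∀ p, (∑ h ∈ univ.filter (fun h => eP h = p), (y h : ℝ)) ≤ (bP p : ℝ)) ∧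
      (∀ q, (∑ h ∈ univ.filter (fun h => eQ h = q), (y h : ℝ)) ≤ (bQ q : ℝ)) ∧
      (∑ h, (y h : ℝ)) = ((⌊∑ h, x h⌋ : ℤ) : ℝ) := by
  classical
  set k : ℝ := ∑ h, x h with hk
  have hk0 : 0 ≤ k := Finset.sum_nonneg (fun h _ => hx0 h)
  have hfl0 : 0 ≤ ⌊k⌋ := Int.floor_nonneg.mpr hk0
  set N : ℕ := (⌊k⌋).toNat with hN
  have hNcast : ((⌊k⌋ : ℤ) : ℝ) = (N : ℝ) := by
    have hnn : ((N : ℕ) : ℤ) = ⌊k⌋ := Int.toNat_of_nonneg hfl0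
    exact_mod_cast hnn.symm
  have hNk : (N : ℝ) ≤ k := by rw [← hNcast]; exact Int.floor_le k
  set BP : ℕ := ∑ p, bP p with hBP
  -- natural-number key inequality
  have keyN : ∀ T : Finset P,
      N + ∑ p ∈ T, bP p ≤ (∑ q ∈ T.biUnion (nbr eP eQ), bQ q) + BP := by
    intro T
    have hkey := key_ineq eP eQ bP bQ x hx0 hxP hxQ T
    have hcompl : (∑ p ∈ T, (bP p : ℝ)) + ∑ p ∈ Tᶜ, (bP p : ℝ) = (BP : ℝ) := by
      rw [Finset.sum_add_sum_compl]
      push_cast [hBP]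
      rfl
    have hreal : (N : ℝ) + ∑ p ∈ T, (bP p : ℝ) ≤
        (∑ q ∈ T.biUnion (nbr eP eQ), (bQ q : ℝ)) + (BP : ℝ) := by
      rw [← hcompl]
      have := add_le_add (hNk.trans hkey) (le_refl (∑ p ∈ T, (bP p : ℝ)))
      linarith
    exact_mod_cast hreal
  have hNBP : N ≤ BP := by
    have h0 := keyN ∅
    simpa using h0
  set d : ℕ := BP - N with hd
  -- Hall's condition
  have hallkey : ∀ T : Finset P,
      (∑ p ∈ T, bP p) ≤ (∑ q ∈ T.biUnion (nbr eP eQ), bQ q) + d := by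
    intro T
    have := keyN T
    omega
  obtain ⟨f, hfinj, hft⟩ := (Finset.all_card_le_biUnion_card_iff_exists_injective
    (fun (a : Σ p : P, Fin (bP p)) =>
      (((nbr eP eQ a.1).sigma (fun q => (univ : Finset (Fin (bQ q))))).disjSum
        (univ : Finset (Fin d))))).mp (hall_cond eP eQ bP bQ d hallkey)
  obtain ⟨y0, hy0P, hy0Q, hy0tot⟩ := build_y eP eQ bP bQ d f hfinj hft
  have hy0N : N ≤ ∑ h, y0 h := by rw [hd] at hy0tot; omega
  obtain ⟨y, hyle, hysum⟩ := exists_le_sum_eq ((∑ h, y0 h) - N) y0 N (by omega)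
  refine ⟨y, ?_, ?_, ?_⟩
  · intro p
    have h1 : (∑ h ∈ univ.filter (fun h => eP h = p), y h) ≤ bP p :=
      le_trans (Finset.sum_le_sum (fun h _ => hyle h)) (hy0P p)
    exact_mod_cast h1
  · intro q
    have h1 : (∑ h ∈ univ.filter (fun h => eQ h = q), y h) ≤ bQ q :=
      le_trans (Finset.sum_le_sum (fun h _ => hyle h)) (hy0Q q)
    exact_mod_cast h1
  · rw [hNcast]
    exact_mod_cast hysum
end

section
/- (Cost characterization of the min-cost flow encoding of perfect b-matching.) For the associated min-cost flow instance Ĝ built from (G, b): (i) every feasible σ̂-flow in Ĝ has cost at least Σ_{p∈P} b_p; and (ii) if G admits a fractional perfect b-matching, then Ĝ admits a feasible σ̂-flow of cost exactly Σ_{p∈P} b_p. -/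
open Finset

/-- Thickness of an edge `e = (p,q)`: `d(e) = min(b_p, b_q)`. -/
def hatD {P Q Ed : Type*} (eP : Ed → P) (eQ : Ed → Q) (bP : P → ℕ) (bQ : Q → ℕ)
    (e : Ed) : ℕ :=
  min (bP (eP e)) (bQ (eQ e))

/-- Vertices of the min-cost flow instance `Ĝ`: the special vertex `v*`, a vertex `s_p`
for each `p ∈ P`, and a vertex `t_q` for each `q ∈ Q`. -/
abbrev HatV (P Q : Type*) : Type _ := Unit ⊕ (P ⊕ Q)

/-- Arcs of `Ĝ`: `d(e)` parallel copies of `(s_p, t_q)` for each edge `e = (p,q)` of `G`,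
arcs `(s_p, v*)` and `(v*, s_p)` for each `p ∈ P`, and arcs `(v*, t_q)` and `(t_q, v*)`
for each `q ∈ Q`. -/
abbrev HatArc (P Q Ed : Type*) (d : Ed → ℕ) : Type _ :=
  ((e : Ed) × Fin (d e)) ⊕ ((P ⊕ P) ⊕ (Q ⊕ Q))

/-- The tail of each arc of `Ĝ`. -/
def hatTail {P Q Ed : Type*} (eP : Ed → P) (d : Ed → ℕ) :
    HatArc P Q Ed d → HatV P Q
  | Sum.inl ⟨e, _⟩ => Sum.inr (Sum.inl (eP e))          -- copy of (s_p, t_q)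
  | Sum.inr (Sum.inl (Sum.inl p)) => Sum.inr (Sum.inl p) -- (s_p, v*)
  | Sum.inr (Sum.inl (Sum.inr _)) => Sum.inl ()          -- (v*, s_p)
  | Sum.inr (Sum.inr (Sum.inl _)) => Sum.inl ()          -- (v*, t_q)
  | Sum.inr (Sum.inr (Sum.inr q)) => Sum.inr (Sum.inr q) -- (t_q, v*)

/-- The head of each arc of `Ĝ`. -/
def hatHead {P Q Ed : Type*} (eQ : Ed → Q) (d : Ed → ℕ) :
    HatArc P Q Ed d → HatV P Q
  | Sum.inl ⟨e, _⟩ => Sum.inr (Sum.inr (eQ e))           -- copy of (s_p, t_q)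
  | Sum.inr (Sum.inl (Sum.inl _)) => Sum.inl ()          -- (s_p, v*)
  | Sum.inr (Sum.inl (Sum.inr p)) => Sum.inr (Sum.inl p) -- (v*, s_p)
  | Sum.inr (Sum.inr (Sum.inl q)) => Sum.inr (Sum.inr q) -- (v*, t_q)
  | Sum.inr (Sum.inr (Sum.inr _)) => Sum.inl ()          -- (t_q, v*)

/-- Net outflow of `f` at a vertex `v`: flow on arcs leaving `v` minus flow on arcs
entering `v`. -/
def netOut {W A : Type*} [Fintype A] [DecidableEq W]
    (tl hd : A → W) (f : A → ℝ) (v : W) : ℝ :=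
  (∑ a ∈ univ.filter (fun a => tl a = v), f a)
    - ∑ a ∈ univ.filter (fun a => hd a = v), f a

/-- A feasible `σ̂`-flow in `Ĝ`: nonnegative on every arc, net outflow `b_p` at each `s_p`,
net inflow `b_q` at each `t_q`, and net flow zero at `v*`. -/
def IsFeasibleHatFlow {P Q Ed : Type*} [Fintype P] [Fintype Q] [Fintype Ed]
    [DecidableEq P] [DecidableEq Q]
    (eP : Ed → P) (eQ : Ed → Q) (bP : P → ℕ) (bQ : Q → ℕ)
    (f : HatArc P Q Ed (hatD eP eQ bP bQ) → ℝ) : Prop :=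
  (∀ a, 0 ≤ f a) ∧
  (∀ p : P, netOut (hatTail eP _) (hatHead eQ _) f (Sum.inr (Sum.inl p)) = (bP p : ℝ)) ∧
  (∀ q : Q, netOut (hatTail eP _) (hatHead eQ _) f (Sum.inr (Sum.inr q)) = -(bQ q : ℝ)) ∧
  netOut (hatTail eP _) (hatHead eQ _) f (Sum.inl ()) = 0

lemma sum_fin_if_zero {n : ℕ} (hn : 1 ≤ n) (c : ℝ) :
    ∑ i : Fin n, (if (i : ℕ) = 0 then c else 0) = c := by
  obtain ⟨m, rfl⟩ := Nat.exists_eq_add_of_le hn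
  rw [Nat.add_comm, Fin.sum_univ_succ]
  simp

/-- Cost characterization of the min-cost flow encoding of perfect `b`-matching:
every feasible `σ̂`-flow in `Ĝ` has cost at least `Σ_{p∈P} b_p`, and if `G` admits a
fractional perfect `b`-matching then `Ĝ` admits a feasible `σ̂`-flow of cost exactly
`Σ_{p∈P} b_p`. -/
theorem mincost_flow_encoding_cost
    {P Q Ed : Type*} [Fintype P] [Fintype Q] [Fintype Ed]
    [DecidableEq P] [DecidableEq Q]
    (eP : Ed → P) (eQ : Ed → Q) (bP : P → ℕ) (bQ : Q → ℕ)
    (hbP : ∀ p, 1 ≤ bP p) (hbQ : ∀ q, 1 ≤ bQ q)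
    (hbal : ∑ p, bP p = ∑ q, bQ q) :
    (∀ f : HatArc P Q Ed (hatD eP eQ bP bQ) → ℝ,
       IsFeasibleHatFlow eP eQ bP bQ f → (∑ p, (bP p : ℝ)) ≤ ∑ a, f a) ∧
    ((∃ x : Ed → ℝ, (∀ e, 0 ≤ x e) ∧
        (∀ p, (∑ e ∈ univ.filter (fun e => eP e = p), x e) = (bP p : ℝ)) ∧
        (∀ q, (∑ e ∈ univ.filter (fun e => eQ e = q), x e) = (bQ q : ℝ))) →
      ∃ f : HatArc P Q Ed (hatD eP eQ bP bQ) → ℝ,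
        IsFeasibleHatFlow eP eQ bP bQ f ∧ (∑ a, f a) = ∑ p, (bP p : ℝ)) := by
  classical
  constructor
  · intro f hf
    obtain ⟨hpos, hP, hQ, hv⟩ := hf
    have key : ∑ v : HatV P Q,
        (∑ a ∈ univ.filter (fun a => hatTail eP (hatD eP eQ bP bQ) a = v), f a) = ∑ a, f a :=
      Finset.sum_fiberwise _ _ _
    set g : HatV P Q → ℝ :=
      fun v => ∑ a ∈ univ.filter (fun a => hatTail eP (hatD eP eQ bP bQ) a = v), f a with hg
    have hgnn : ∀ v, 0 ≤ g v := fun v => Finset.sum_nonneg fun a _ => hpos a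
    have hsum : ∑ v : HatV P Q, g v
        = (∑ u : Unit, g (Sum.inl u))
          + ((∑ p, g (Sum.inr (Sum.inl p))) + ∑ q, g (Sum.inr (Sum.inr q))) := by
      rw [Fintype.sum_sum_type]
      congr 1
      rw [Fintype.sum_sum_type]
    have hlow : ∀ p, (bP p : ℝ) ≤ g (Sum.inr (Sum.inl p)) := by
      intro p
      have h1 := hP p
      have h2 : 0 ≤ ∑ a ∈ univ.filter
          (fun a => hatHead eQ (hatD eP eQ bP bQ) a = Sum.inr (Sum.inl p)), f a :=
        Finset.sum_nonneg fun a _ => hpos a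
      rw [netOut] at h1
      linarith
    calc ∑ p, (bP p : ℝ) ≤ ∑ p, g (Sum.inr (Sum.inl p)) := Finset.sum_le_sum fun p _ => hlow p
    _ ≤ ∑ v : HatV P Q, g v := by
        rw [hsum]
        have h1 : 0 ≤ ∑ u : Unit, g (Sum.inl u) := Finset.sum_nonneg fun u _ => hgnn _
        have h2 : 0 ≤ ∑ q, g (Sum.inr (Sum.inr q)) := Finset.sum_nonneg fun q _ => hgnn _
        linarith
    _ = ∑ a, f a := key
  · rintro ⟨x, hx0, hxP, hxQ⟩
    have hd1 : ∀ e, 1 ≤ hatD eP eQ bP bQ e := fun e => le_min (hbP _) (hbQ _)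
    refine ⟨Sum.elim (fun ei => if (ei.2 : ℕ) = 0 then x ei.1 else 0) (fun _ => 0),
      ⟨?_, ?_, ?_, ?_⟩, ?_⟩
    · rintro (⟨e, i⟩ | a)
      · simp only [Sum.elim_inl]
        split_ifs
        · exact hx0 e
        · exact le_rfl
      · exact le_rfl
    · intro p
      rw [netOut, Finset.sum_filter, Finset.sum_filter]
      rw [Fintype.sum_sum_type, Fintype.sum_sum_type, Fintype.sum_sum_type, Fintype.sum_sum_type,
        Fintype.sum_sum_type, Fintype.sum_sum_type,
        ← Finset.univ_sigma_univ, Finset.sum_sigma]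
      simp only [hatTail, hatHead, Sum.elim_inl, Sum.elim_inr, Sum.inr.injEq, Sum.inl.injEq,
        reduceCtorEq, if_false, if_true, ite_self, Finset.sum_const_zero, add_zero, zero_add,
        sub_zero]
      have step : ∀ e, (∑ i : Fin (hatD eP eQ bP bQ e),
          if eP e = p then if (i : ℕ) = 0 then x e else 0 else 0)
          = if eP e = p then x e else 0 := by
        intro e
        by_cases h : eP e = p <;> simp [h, sum_fin_if_zero (hd1 e)]
      simp_rw [step]
      rw [← Finset.sum_filter, hxP]
      simp
    · intro q
      rw [netOut, Finset.sum_filter, Finset.sum_filter]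
      rw [Fintype.sum_sum_type, Fintype.sum_sum_type, Fintype.sum_sum_type, Fintype.sum_sum_type,
        Fintype.sum_sum_type, Fintype.sum_sum_type,
        ← Finset.univ_sigma_univ, Finset.sum_sigma]
      simp only [hatTail, hatHead, Sum.elim_inl, Sum.elim_inr, Sum.inr.injEq, Sum.inl.injEq,
        reduceCtorEq, if_false, if_true, ite_self, Finset.sum_const_zero, add_zero, zero_add,
        zero_sub, neg_inj]
      have step : ∀ e, (∑ i : Fin (hatD eP eQ bP bQ e),
          if eQ e = q then if (i : ℕ) = 0 then x e else 0 else 0)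
          = if eQ e = q then x e else 0 := by
        intro e
        by_cases h : eQ e = q <;> simp [h, sum_fin_if_zero (hd1 e)]
      rw [Finset.sum_sigma]
      simp_rw [step]
      rw [← Finset.sum_filter, hxQ]
      simp
    · rw [netOut, Finset.sum_filter, Finset.sum_filter]
      rw [Fintype.sum_sum_type, Fintype.sum_sum_type, Fintype.sum_sum_type, Fintype.sum_sum_type,
        Fintype.sum_sum_type, Fintype.sum_sum_type,
        ← Finset.univ_sigma_univ, Finset.sum_sigma]
      simp [hatTail, hatHead]
    · rw [Fintype.sum_sum_type, ← Finset.univ_sigma_univ, Finset.sum_sigma]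
      have step : ∀ e, (∑ i : Fin (hatD eP eQ bP bQ e),
          if (i : ℕ) = 0 then x e else 0) = x e := fun e => sum_fin_if_zero (hd1 e) _
      simp only [Sum.elim_inl, Sum.elim_inr, Finset.sum_const_zero, add_zero]
      simp_rw [step]
      rw [← Finset.sum_fiberwise univ eP x]
      exact Finset.sum_congr rfl fun p _ => hxP p
end

section
/- Let f be a σ-flow with f_e > 0 for all arcs, s_e > 0, ν_e ≥ 1 for all arcs, and suppose the triple (f, s, ν) is γ-centered for some 0 ≤ γ < 1. Set r_e := s_e/f_e, let f̂ be a σ-flow minimizing the energy E_r among all σ-flows, and define the congestion ρ_e := |f̂_e|/f_e. Then: (i) Σ_e ν_e ρ_e⁴ ≤ (Σ_e ν_e ρ_e²)²; (ii) (1 − γ)·μ̂(f,s,ν)·Σ_e ν_e ρ_e² ≤ E_r(f̂) ≤ μ̂(f,s,ν)·Σ_e ν_e; and consequently (iii) Σ_e ν_e ρ_e⁴ ≤ ((Σ_e ν_e)/(1 − γ))². -/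
open Finset

/-- The weighted average `μ̂(f,s,ν) = (Σ_e f_e s_e)/(Σ_e ν_e)`. -/
noncomputable def muhat {E : Type*} [Fintype E] (f s ν : E → ℝ) : ℝ :=
  (∑ e, f e * s e) / (∑ e, ν e)

/-- The triple `(f,s,ν)` is `γ`-centered. -/
def IsCentered {E : Type*} [Fintype E] (f s ν : E → ℝ) (γ : ℝ) : Prop :=
  (∑ e, ν e * (f e * s e / ν e - muhat f s ν) ^ 2) ≤ γ ^ 2 * muhat f s ν ^ 2

/-- Congestion bounds for the electrical flow associated with a `γ`-centered solution:
(i) `Σ ν ρ⁴ ≤ (Σ ν ρ²)²`; (ii) `(1−γ)·μ̂·Σ ν ρ² ≤ E_r(f̂) ≤ μ̂·Σ ν`;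
(iii) `Σ ν ρ⁴ ≤ ((Σ ν)/(1−γ))²`. -/
theorem congestion_fourth_moment_bound
    {V E : Type*} [Fintype V] [Fintype E] [DecidableEq V]
    (tail head : E → V) (σ : V → ℝ) (hσ : ∑ v, σ v = 0)
    (f s ν : E → ℝ) (hf : ∀ e, 0 < f e) (hs : ∀ e, 0 < s e) (hν : ∀ e, 1 ≤ ν e)
    (γ : ℝ) (hγ0 : 0 ≤ γ) (hγ1 : γ < 1) (hcent : IsCentered f s ν γ)
    (hflow : IsFlow tail head σ f)
    (r : E → ℝ) (hr : ∀ e, r e = s e / f e)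
    (fhat : E → ℝ) (hfhat : IsFlow tail head σ fhat)
    (hmin : ∀ g : E → ℝ, IsFlow tail head σ g → energy r fhat ≤ energy r g)
    (ρ : E → ℝ) (hρ : ∀ e, ρ e = |fhat e| / f e) :
    (∑ e, ν e * ρ e ^ 4) ≤ (∑ e, ν e * ρ e ^ 2) ^ 2 ∧
    ((1 - γ) * muhat f s ν * ∑ e, ν e * ρ e ^ 2) ≤ energy r fhat ∧
    energy r fhat ≤ muhat f s ν * (∑ e, ν e) ∧
    (∑ e, ν e * ρ e ^ 4) ≤ ((∑ e, ν e) / (1 - γ)) ^ 2 := by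

  have hν0 : ∀ e, (0:ℝ) < ν e := fun e => lt_of_lt_of_le one_pos (hν e)
  have hρnn : ∀ e, 0 ≤ ρ e := fun e => (hρ e) ▸ div_nonneg (abs_nonneg _) (hf e).le
  have hρsq : ∀ e, ρ e ^ 2 = fhat e ^ 2 / f e ^ 2 := by
    intro e; rw [hρ e, div_pow, sq_abs]
  set μ := muhat f s ν with hμdef
  set A := ∑ e, ν e * ρ e ^ 2 with hA
  set S := ∑ e, ν e with hS
  have hAnn : 0 ≤ A := Finset.sum_nonneg fun e _ => mul_nonneg (hν0 e).le (sq_nonneg _)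
  have hSnn : 0 ≤ S := Finset.sum_nonneg fun e _ => (hν0 e).le
  -- energy identity
  have hE : energy r fhat = ∑ e, (f e * s e) * ρ e ^ 2 := by
    unfold energy
    refine Finset.sum_congr rfl fun e _ => ?_
    have hne := (hf e).ne'
    rw [hr, hρsq]
    field_simp
  -- part (i)
  have hi : (∑ e, ν e * ρ e ^ 4) ≤ A ^ 2 := by
    have hterm : ∀ e ∈ (univ : Finset E), ν e * ρ e ^ 4 ≤ (ν e * ρ e ^ 2) * A := by
      intro e _
      have h1 : ν e * ρ e ^ 2 ≤ A :=
        Finset.single_le_sum (fun i _ => mul_nonneg (hν0 i).le (sq_nonneg _)) (mem_univ e)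
      have h2 : ν e * ρ e ^ 4 ≤ (ν e * ρ e ^ 2) * (ν e * ρ e ^ 2) := by
        nlinarith [mul_nonneg (mul_nonneg (hν0 e).le (sub_nonneg.mpr (hν e))) (pow_nonneg (hρnn e) 4)]
      have h3 := mul_le_mul_of_nonneg_left h1 (mul_nonneg (hν0 e).le (sq_nonneg (ρ e)))
      linarith
    calc (∑ e, ν e * ρ e ^ 4) ≤ ∑ e, (ν e * ρ e ^ 2) * A := Finset.sum_le_sum hterm
      _ = A * A := by rw [← Finset.sum_mul]
      _ = A ^ 2 := (sq A).symm
  -- upper bound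
  have hEf : energy r f = ∑ e, f e * s e := by
    unfold energy
    refine Finset.sum_congr rfl fun e _ => ?_
    have hne := (hf e).ne'
    rw [hr]
    field_simp
  rcases isEmpty_or_nonempty E with hEmp | hNe
  · have hA0 : A = 0 := by simp [hA]
    have hS0 : S = 0 := by simp [hS]
    have hmu0 : μ = 0 := by simp [hμdef, muhat]
    have hE0 : energy r fhat = 0 := by simp [energy]
    refine ⟨hi, ?_, ?_, ?_⟩
    · rw [hA0, hmu0, hE0]; norm_num
    · rw [hS0, hmu0, hE0]; norm_num
    · calc (∑ e, ν e * ρ e ^ 4) ≤ A ^ 2 := hi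
        _ ≤ (S / (1 - γ)) ^ 2 := by rw [hA0, hS0]; norm_num
  · have hSpos : 0 < S := by
      obtain ⟨e⟩ := hNe
      exact lt_of_lt_of_le one_pos
        (le_trans (hν e) (Finset.single_le_sum (fun i _ => (hν0 i).le) (mem_univ e)))
    have hfspos : 0 < ∑ e, f e * s e :=
      Finset.sum_pos (fun e _ => mul_pos (hf e) (hs e)) univ_nonempty
    have hμpos : 0 < μ := div_pos hfspos hSpos
    have hμS : μ * S = ∑ e, f e * s e := by
      rw [hμdef, muhat, ← hS, div_mul_cancel₀ _ (ne_of_gt hSpos)]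
    have hub : energy r fhat ≤ μ * S := by
      rw [hμS, ← hEf]; exact hmin f hflow
    -- lower bound via Cauchy–Schwarz
    have hCS : (∑ e, ν e * (f e * s e / ν e - μ) * ρ e ^ 2) ^ 2
        ≤ (∑ e, ν e * (f e * s e / ν e - μ) ^ 2) * (∑ e, ν e * ρ e ^ 4) := by
      have := Finset.sum_mul_sq_le_sq_mul_sq univ
        (fun e => Real.sqrt (ν e) * (f e * s e / ν e - μ))
        (fun e => Real.sqrt (ν e) * ρ e ^ 2)
      have e1 : ∀ e : E, (Real.sqrt (ν e) * (f e * s e / ν e - μ))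
          * (Real.sqrt (ν e) * ρ e ^ 2) = ν e * (f e * s e / ν e - μ) * ρ e ^ 2 := by
        intro e
        rw [show Real.sqrt (ν e) * (f e * s e / ν e - μ) * (Real.sqrt (ν e) * ρ e ^ 2)
            = (Real.sqrt (ν e) * Real.sqrt (ν e)) * ((f e * s e / ν e - μ) * ρ e ^ 2) by ring,
          Real.mul_self_sqrt (hν0 e).le]
        ring
      have e2 : ∀ e : E, (Real.sqrt (ν e) * (f e * s e / ν e - μ)) ^ 2
          = ν e * (f e * s e / ν e - μ) ^ 2 := by
        intro e; rw [mul_pow, Real.sq_sqrt (hν0 e).le]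
      have e3 : ∀ e : E, (Real.sqrt (ν e) * ρ e ^ 2) ^ 2 = ν e * ρ e ^ 4 := by
        intro e; rw [mul_pow, Real.sq_sqrt (hν0 e).le]; ring
      simpa only [e1, e2, e3] using this
    have hvar : (∑ e, ν e * (f e * s e / ν e - μ) ^ 2) ≤ γ ^ 2 * μ ^ 2 := hcent
    have hCS2 : (∑ e, ν e * (f e * s e / ν e - μ) * ρ e ^ 2) ^ 2 ≤ (γ * μ * A) ^ 2 := by
      have hvnn : 0 ≤ ∑ e, ν e * (f e * s e / ν e - μ) ^ 2 :=
        Finset.sum_nonneg fun e _ => mul_nonneg (hν0 e).le (sq_nonneg _)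
      have h4nn : 0 ≤ ∑ e, ν e * ρ e ^ 4 :=
        Finset.sum_nonneg fun e _ => mul_nonneg (hν0 e).le (by positivity)
      calc (∑ e, ν e * (f e * s e / ν e - μ) * ρ e ^ 2) ^ 2
          ≤ (∑ e, ν e * (f e * s e / ν e - μ) ^ 2) * (∑ e, ν e * ρ e ^ 4) := hCS
        _ ≤ (γ ^ 2 * μ ^ 2) * A ^ 2 := by
            apply mul_le_mul hvar hi h4nn (by positivity)
        _ = (γ * μ * A) ^ 2 := by ring
    have hdev : -(γ * μ * A) ≤ ∑ e, ν e * (f e * s e / ν e - μ) * ρ e ^ 2 := by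
      have hnn : 0 ≤ γ * μ * A := by positivity
      nlinarith [hCS2]
    have hsplit : energy r fhat = (∑ e, ν e * (f e * s e / ν e - μ) * ρ e ^ 2) + μ * A := by
      rw [hE, hA, Finset.mul_sum, ← Finset.sum_add_distrib]
      refine Finset.sum_congr rfl fun e _ => ?_
      have hne : ν e ≠ 0 := ne_of_gt (hν0 e)
      field_simp
      ring
    have hlb : (1 - γ) * μ * A ≤ energy r fhat := by
      rw [hsplit]; nlinarith [hdev]
    refine ⟨hi, hlb, hub, ?_⟩
    have hAS : A ≤ S / (1 - γ) := by
      have h1 : (1 - γ) * μ * A ≤ μ * S := le_trans hlb hub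
      have h2 : (1 - γ) * A ≤ S := by
        have := (mul_le_mul_iff_right₀ hμpos).mp (by linarith [h1] : μ * ((1 - γ) * A) ≤ μ * S)
        linarith
      rw [le_div_iff₀ (by linarith : (0:ℝ) < 1 - γ)]
      linarith
    calc (∑ e, ν e * ρ e ^ 4) ≤ A ^ 2 := hi
      _ ≤ (S / (1 - γ)) ^ 2 := by
          apply sq_le_sq' (by linarith [div_nonneg hSnn (by linarith : (0:ℝ) ≤ 1 - γ)]) hAS
end

section
/- (Descent step duality-gap decrease.) Let E be a finite index type, f, s : E → ℝ with f_e > 0 and s_e > 0 for all e, let f̂ : E → ℝ be arbitrary, and let 0 < δ < 1. Define f̄_e := (1 − δ) f_e + δ f̂_e and s̄_e := s_e − (δ/(1 − δ))·(s_e/f_e)·f̂_e. Then for every index e one has f̄_e s̄_e = (1 − δ − (δ f̂_e/f_e)²/(1 − δ))·f_e s_e; consequently Σ_e f̄_e s̄_e ≤ (1 − δ)·Σ_e f_e s_e, and hence μ̂(f̄, s̄, ν) ≤ (1 − δ)·μ̂(f, s, ν) for any ν : E → ℝ with ν_e > 0. Moreover, if f and f̂ are both σ-flows on a directed graph with arc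 set E, then f̄ is a σ-flow as well. -/
open Finset

/-- Descent step duality-gap decrease: with `f̄ = (1−δ)f + δf̂` and
`s̄ = s − (δ/(1−δ))(s/f)f̂`, the per-coordinate identity
`f̄_e s̄_e = (1 − δ − (δf̂_e/f_e)²/(1−δ)) f_e s_e` holds; consequently
`Σ f̄ s̄ ≤ (1−δ) Σ f s` and `μ̂(f̄,s̄,ν) ≤ (1−δ) μ̂(f,s,ν)`; moreover the update preserves
being a `σ`-flow. -/
theorem descent_step_duality_gap
    {V E : Type*} [Fintype V] [Fintype E] [DecidableEq V]
    (f s : E → ℝ) (hf : ∀ e, 0 < f e) (hs : ∀ e, 0 < s e)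
    (fhat : E → ℝ) (δ : ℝ) (hδ0 : 0 < δ) (hδ1 : δ < 1)
    (fbar sbar : E → ℝ)
    (hfbar : ∀ e, fbar e = (1 - δ) * f e + δ * fhat e)
    (hsbar : ∀ e, sbar e = s e - (δ / (1 - δ)) * (s e / f e) * fhat e) :
    (∀ e, fbar e * sbar e
        = (1 - δ - (δ * fhat e / f e) ^ 2 / (1 - δ)) * (f e * s e)) ∧
    ((∑ e, fbar e * sbar e) ≤ (1 - δ) * ∑ e, f e * s e) ∧
    (∀ ν : E → ℝ, (∀ e, 0 < ν e) → muhat fbar sbar ν ≤ (1 - δ) * muhat f s ν) ∧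
    (∀ (tail head : E → V) (σ : V → ℝ),
      IsFlow tail head σ f → IsFlow tail head σ fhat → IsFlow tail head σ fbar) := by
  have h1δ : (0:ℝ) < 1 - δ := by linarith
  have key : ∀ e, fbar e * sbar e
      = (1 - δ - (δ * fhat e / f e) ^ 2 / (1 - δ)) * (f e * s e) := by
    intro e
    have hfe : f e ≠ 0 := (hf e).ne'
    rw [hfbar, hsbar]
    field_simp
    ring
  have hsum : (∑ e, fbar e * sbar e) ≤ (1 - δ) * ∑ e, f e * s e := by
    rw [Finset.mul_sum]
    apply Finset.sum_le_sum
    intro e _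
    rw [key e]
    have hfs : 0 < f e * s e := mul_pos (hf e) (hs e)
    have hsq : 0 ≤ (δ * fhat e / f e) ^ 2 / (1 - δ) :=
      div_nonneg (sq_nonneg _) h1δ.le
    nlinarith
  refine ⟨key, hsum, ?_, ?_⟩
  · intro ν hν
    rcases isEmpty_or_nonempty E with hE | hE
    · simp [muhat]
    have hν' : 0 < ∑ e, ν e := Finset.sum_pos (fun e _ => hν e) Finset.univ_nonempty
    unfold muhat
    rw [← mul_div_assoc]
    gcongr
  · intro tail head σ hF hFhat v
    have := hF v
    have := hFhat v
    simp only [hfbar, Finset.sum_add_distrib, ← Finset.mul_sum]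
    nlinarith [hF v, hFhat v]
end

section
/- (Descent step approximately preserves centering.) Let E be a finite index type and f, s, ν : E → ℝ with f_e > 0, s_e > 0, ν_e ≥ 1 for all e, and suppose (f, s, ν) is γ-centered for some 0 < γ ≤ 1/400. Let f̂ : E → ℝ, set ρ_e := |f̂_e|/f_e, and let δ satisfy 0 < δ ≤ 1/2 and δ⁴·Σ_e ν_e ρ_e⁴ ≤ γ². Define f̄_e := (1 − δ) f_e + δ f̂_e, s̄_e := s_e − (δ/(1 − δ))·(s_e/f_e)·f̂_e, and μ̄_e := f̄_e s̄_e/ν_e. Then Σ_e ν_e (μ̄_e − (1 − δ)·μ̂(f,s,ν))² ≤ 11·γ²·μ̂(f,s,ν)². -/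
open Finset

/-- Descent step approximately preserves centering: starting from a `γ`-centered
solution with `0 < γ ≤ 1/400`, `0 < δ ≤ 1/2`, and `δ⁴ Σ ν ρ⁴ ≤ γ²`, the updated pair
`(f̄, s̄)` satisfies `Σ ν (μ̄_e − (1−δ)μ̂)² ≤ 11 γ² μ̂²`. -/
theorem descent_step_centering
    {E : Type*} [Fintype E] [Nonempty E]
    (f s ν : E → ℝ) (hf : ∀ e, 0 < f e) (hs : ∀ e, 0 < s e) (hν : ∀ e, 1 ≤ ν e)
    (γ : ℝ) (hγ0 : 0 < γ) (hγ1 : γ ≤ 1 / 400) (hcent : IsCentered f s ν γ)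
    (fhat : E → ℝ) (ρ : E → ℝ) (hρ : ∀ e, ρ e = |fhat e| / f e)
    (δ : ℝ) (hδ0 : 0 < δ) (hδ1 : δ ≤ 1 / 2)
    (hδρ : δ ^ 4 * (∑ e, ν e * ρ e ^ 4) ≤ γ ^ 2)
    (fbar sbar : E → ℝ)
    (hfbar : ∀ e, fbar e = (1 - δ) * f e + δ * fhat e)
    (hsbar : ∀ e, sbar e = s e - (δ / (1 - δ)) * (s e / f e) * fhat e) :
    (∑ e, ν e * (fbar e * sbar e / ν e - (1 - δ) * muhat f s ν) ^ 2)
      ≤ 11 * γ ^ 2 * muhat f s ν ^ 2 := by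
  classical
  have hcent' : (∑ e, ν e * (f e * s e / ν e - muhat f s ν) ^ 2)
      ≤ γ ^ 2 * muhat f s ν ^ 2 := hcent
  set M := muhat f s ν with hMdef
  have hνpos : ∀ e, (0:ℝ) < ν e := fun e => lt_of_lt_of_le one_pos (hν e)
  have hNpos : (0:ℝ) < ∑ e, ν e := Finset.sum_pos (fun e _ => hνpos e) univ_nonempty
  have hFSpos : (0:ℝ) < ∑ e, f e * s e :=
    Finset.sum_pos (fun e _ => mul_pos (hf e) (hs e)) univ_nonempty
  have hM : 0 < M := div_pos hFSpos hNpos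
  have h1δ : (0:ℝ) < 1 - δ := by linarith
  -- each μ̂_e is at most (1+γ) M
  have hxub : ∀ e, f e * s e / ν e ≤ (1 + γ) * M := by
    intro e
    have h1 : ν e * (f e * s e / ν e - M) ^ 2 ≤ γ ^ 2 * M ^ 2 :=
      le_trans (Finset.single_le_sum (f := fun i => ν i * (f i * s i / ν i - M) ^ 2)
        (fun i _ => mul_nonneg (hνpos i).le (sq_nonneg _)) (mem_univ e)) hcent'
    have h2 : (f e * s e / ν e - M) ^ 2 ≤ (γ * M) ^ 2 := by
      nlinarith [hν e, sq_nonneg (f e * s e / ν e - M)]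
    nlinarith [mul_pos hγ0 hM]
  -- pointwise bound
  have key : ∀ e, ν e * (fbar e * sbar e / ν e - (1 - δ) * M) ^ 2 ≤
      3 * (1 - δ) ^ 2 * (ν e * (f e * s e / ν e - M) ^ 2)
        + 6 * (1 + γ) ^ 2 * M ^ 2 * (δ ^ 4 * (ν e * ρ e ^ 4)) := by
    intro e
    have hfe := hf e
    have hse := hs e
    have hνe := hνpos e
    set x : ℝ := f e * s e / ν e with hxdef
    have hx0 : 0 < x := div_pos (mul_pos hfe hse) hνe
    have hxe := hxub e
    have hρ2 : ρ e ^ 2 = fhat e ^ 2 / f e ^ 2 := by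
      rw [hρ e, div_pow, sq_abs]
    -- identity for the updated product
    have hid : fbar e * sbar e / ν e = (1 - δ) * x - (δ ^ 2 / (1 - δ)) * x * ρ e ^ 2 := by
      rw [hfbar e, hsbar e, hρ2, hxdef]
      field_simp
      ring
    set c : ℝ := (δ ^ 2 / (1 - δ)) * x * ρ e ^ 2 with hcdef
    have hq : δ ^ 2 / (1 - δ) ≤ 2 * δ ^ 2 := by
      rw [div_le_iff₀ h1δ]; nlinarith
    have hq0 : 0 ≤ δ ^ 2 / (1 - δ) := div_nonneg (sq_nonneg δ) h1δ.le
    have hcle : c ≤ (2 * δ ^ 2) * ((1 + γ) * M) * ρ e ^ 2 := by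
      apply mul_le_mul_of_nonneg_right _ (sq_nonneg _)
      exact mul_le_mul hq hxe hx0.le (by positivity)
    have hc0 : 0 ≤ c := by positivity
    have hc2 : c ^ 2 ≤ 4 * (1 + γ) ^ 2 * M ^ 2 * (δ ^ 4 * ρ e ^ 4) := by
      calc c ^ 2 ≤ ((2 * δ ^ 2) * ((1 + γ) * M) * ρ e ^ 2) ^ 2 :=
            pow_le_pow_left₀ hc0 hcle 2
        _ = 4 * (1 + γ) ^ 2 * M ^ 2 * (δ ^ 4 * ρ e ^ 4) := by ring
    have hscalar : ((1 - δ) * (x - M) - c) ^ 2 ≤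
        3 * ((1 - δ) * (x - M)) ^ 2 + 6 * (1 + γ) ^ 2 * M ^ 2 * (δ ^ 4 * ρ e ^ 4) := by
      have hkey : 3 * ((1 - δ) * (x - M)) ^ 2 + (3 / 2) * c ^ 2
          - ((1 - δ) * (x - M) - c) ^ 2
          = (1 / 2) * (2 * ((1 - δ) * (x - M)) + c) ^ 2 := by ring
      linarith [hc2, sq_nonneg (2 * ((1 - δ) * (x - M)) + c), hkey]
    calc ν e * (fbar e * sbar e / ν e - (1 - δ) * M) ^ 2
        = ν e * ((1 - δ) * (x - M) - c) ^ 2 := by rw [hid]; ring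
      _ ≤ ν e * (3 * ((1 - δ) * (x - M)) ^ 2
            + 6 * (1 + γ) ^ 2 * M ^ 2 * (δ ^ 4 * ρ e ^ 4)) :=
          mul_le_mul_of_nonneg_left hscalar hνe.le
      _ = 3 * (1 - δ) ^ 2 * (ν e * (x - M) ^ 2)
            + 6 * (1 + γ) ^ 2 * M ^ 2 * (δ ^ 4 * (ν e * ρ e ^ 4)) := by ring
  calc (∑ e, ν e * (fbar e * sbar e / ν e - (1 - δ) * M) ^ 2)
      ≤ ∑ e, (3 * (1 - δ) ^ 2 * (ν e * (f e * s e / ν e - M) ^ 2)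
          + 6 * (1 + γ) ^ 2 * M ^ 2 * (δ ^ 4 * (ν e * ρ e ^ 4))) :=
        Finset.sum_le_sum fun e _ => key e
    _ = 3 * (1 - δ) ^ 2 * (∑ e, ν e * (f e * s e / ν e - M) ^ 2)
          + 6 * (1 + γ) ^ 2 * M ^ 2 * (δ ^ 4 * (∑ e, ν e * ρ e ^ 4)) := by
        rw [Finset.sum_add_distrib, ← Finset.mul_sum, ← Finset.mul_sum, ← Finset.mul_sum]
    _ ≤ 3 * (1 - δ) ^ 2 * (γ ^ 2 * M ^ 2)
          + 6 * (1 + γ) ^ 2 * M ^ 2 * γ ^ 2 := by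
        gcongr
    _ ≤ 11 * γ ^ 2 * M ^ 2 := by
        have h1 : (1 - δ) ^ 2 ≤ 1 := by nlinarith
        have h2 : (1 + γ) ^ 2 ≤ (401 / 400 : ℝ) ^ 2 := by nlinarith
        nlinarith [mul_pos (pow_pos hγ0 2) (pow_pos hM 2), h1, h2]
end

section
/- (θ-smoothness implies a strong ℓ4 congestion bound.) Let E be a finite index type, ν : E → ℝ with ν_e ≥ 1 for all e, ρ : E → ℝ with ρ_e ≥ 0 for all e, let m > 0 be a real number and 0 < θ ≤ 1. Suppose that for every integer l, Σ_{e : √m/2^{l+1} < ρ_e ≤ √m/2^{l}} ν_e ≤ ⌊θ³·2^{3l}⌋. Then Σ_e ν_e ρ_e⁴ ≤ 4·θ⁴·m². -/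
open Finset

lemma sum_zpow_neg_le (S : Finset ℤ) (l₀ : ℤ) (h : ∀ l ∈ S, l₀ ≤ l) :
    ∑ l ∈ S, (2:ℝ) ^ (-l) ≤ 2 * (2:ℝ) ^ (-l₀) := by
  have h1 : ∑ l ∈ S, (2:ℝ) ^ (-l)
      = (2:ℝ) ^ (-l₀) * ∑ l ∈ S, ((1:ℝ)/2) ^ (l - l₀).toNat := by
    rw [Finset.mul_sum]
    refine Finset.sum_congr rfl fun l hl => ?_
    have hl0 := h l hl
    have : ((1:ℝ)/2) ^ (l - l₀).toNat = (2:ℝ) ^ (-(l - l₀)) := by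
      rw [one_div, inv_pow, ← zpow_natCast, Int.toNat_of_nonneg (by omega), zpow_neg]
    rw [this, ← zpow_add₀ (by norm_num : (2:ℝ) ≠ 0)]
    ring_nf
  rw [h1]
  have hinj : Set.InjOn (fun l : ℤ => (l - l₀).toNat) S := by
    intro a ha b hb hab
    have := h a ha; have := h b hb
    simp only at hab; omega
  have h2 : ∑ l ∈ S, ((1:ℝ)/2) ^ (l - l₀).toNat
      = ∑ n ∈ S.image (fun l => (l - l₀).toNat), ((1:ℝ)/2) ^ n := by
    rw [Finset.sum_image (fun a ha b hb => hinj ha hb)]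
  have h3 : ∑ n ∈ S.image (fun l => (l - l₀).toNat), ((1:ℝ)/2) ^ n ≤ 2 := by
    have hsum : Summable (fun n : ℕ => ((1:ℝ)/2) ^ n) :=
      summable_geometric_of_lt_one (by norm_num) (by norm_num)
    calc _ ≤ ∑' n : ℕ, ((1:ℝ)/2) ^ n :=
          Summable.sum_le_tsum _ (fun n _ => by positivity) hsum
      _ = 2 := by rw [tsum_geometric_of_lt_one (by norm_num) (by norm_num)]; norm_num
  have hpos : (0:ℝ) < (2:ℝ) ^ (-l₀) := by positivity
  calc (2:ℝ) ^ (-l₀) * ∑ l ∈ S, ((1:ℝ)/2) ^ (l - l₀).toNat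
      ≤ (2:ℝ) ^ (-l₀) * 2 := by rw [h2]; exact mul_le_mul_of_nonneg_left h3 hpos.le
    _ = 2 * (2:ℝ) ^ (-l₀) := by ring

/-- θ-smoothness implies a strong ℓ₄ congestion bound: if for every integer `l` the total
measure of indices whose congestion lies in `(√m/2^{l+1}, √m/2^{l}]` is at most
`⌊θ³ 2^{3l}⌋`, then `Σ ν ρ⁴ ≤ 4 θ⁴ m²`. -/
theorem smooth_implies_l4_bound
    {E : Type*} [Fintype E]
    (ν ρ : E → ℝ) (hν : ∀ e, 1 ≤ ν e) (hρ : ∀ e, 0 ≤ ρ e)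
    (m θ : ℝ) (hm : 0 < m) (hθ0 : 0 < θ) (hθ1 : θ ≤ 1)
    (hsmooth : ∀ l : ℤ,
      (∑ e ∈ univ.filter
          (fun e => Real.sqrt m / 2 ^ (l + 1) < ρ e ∧ ρ e ≤ Real.sqrt m / 2 ^ l), ν e)
        ≤ ((⌊θ ^ 3 * (2 : ℝ) ^ (3 * l)⌋ : ℤ) : ℝ)) :
    (∑ e, ν e * ρ e ^ 4) ≤ 4 * θ ^ 4 * m ^ 2 := by
  set s := Real.sqrt m with hs
  have hs0 : 0 < s := Real.sqrt_pos.2 hm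
  have hs2 : s ^ 2 = m := Real.sq_sqrt hm.le
  set T : Finset E := univ.filter (fun e => 0 < ρ e) with hT
  set L : E → ℤ := fun e => Int.log 2 (s / ρ e) with hL
  have hν0 : ∀ e, (0:ℝ) ≤ ν e := fun e => le_trans zero_le_one (hν e)
  -- membership of e in its bucket
  have hbucket : ∀ e ∈ T, s / 2 ^ (L e + 1) < ρ e ∧ ρ e ≤ s / 2 ^ (L e) := by
    intro e he
    have heρ : 0 < ρ e := (Finset.mem_filter.1 he).2
    have hx : 0 < s / ρ e := div_pos hs0 heρ
    have h1 : ((2:ℕ):ℝ) ^ (L e) ≤ s / ρ e := Int.zpow_log_le_self (by norm_num) hx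
    have h2 : s / ρ e < ((2:ℕ):ℝ) ^ (L e + 1) := Int.lt_zpow_succ_log_self (by norm_num) _
    push_cast at h1 h2
    constructor
    · rw [div_lt_iff₀ (by positivity)]
      rw [div_lt_iff₀ heρ] at h2
      linarith [h2]
    · rw [le_div_iff₀ (by positivity : (0:ℝ) < (2:ℝ) ^ (L e))]
      rw [le_div_iff₀ heρ] at h1
      linarith [h1]
  -- fiber is inside bucket
  have hsub : ∀ l : ℤ, T.filter (fun e => L e = l) ⊆
      univ.filter (fun e => s / 2 ^ (l + 1) < ρ e ∧ ρ e ≤ s / 2 ^ l) := by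
    intro l e he
    obtain ⟨heT, hel⟩ := Finset.mem_filter.1 he
    have := hbucket e heT
    rw [hel] at this
    exact Finset.mem_filter.2 ⟨Finset.mem_univ _, this⟩
  -- key: nonempty fiber gives 2^{-l} ≤ θ
  have hkey : ∀ l ∈ T.image L, (2:ℝ) ^ (-l) ≤ θ := by
    intro l hl
    obtain ⟨e, heT, hel⟩ := Finset.mem_image.1 hl
    have heB : e ∈ univ.filter (fun e => s / 2 ^ (l + 1) < ρ e ∧ ρ e ≤ s / 2 ^ l) :=
      hsub l (Finset.mem_filter.2 ⟨heT, hel⟩)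
    have h1 : (1:ℝ) ≤ ∑ e' ∈ univ.filter
        (fun e' => s / 2 ^ (l + 1) < ρ e' ∧ ρ e' ≤ s / 2 ^ l), ν e' :=
      le_trans (hν e) (Finset.single_le_sum (fun e' _ => hν0 e') heB)
    have h2 : (1:ℝ) ≤ θ ^ 3 * (2:ℝ) ^ (3 * l) := by
      have := hsmooth l
      have hf : ((⌊θ ^ 3 * (2:ℝ) ^ (3*l)⌋ : ℤ) : ℝ) ≤ θ ^ 3 * (2:ℝ) ^ (3*l) :=
        Int.floor_le _
      linarith
    have h3 : ((2:ℝ) ^ (-l)) ^ (3:ℕ) ≤ θ ^ (3:ℕ) := by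
      have he1 : ((2:ℝ) ^ (-l)) ^ (3:ℕ) = (2:ℝ) ^ (-(3 * l)) := by
        rw [← zpow_natCast ((2:ℝ) ^ (-l)), ← zpow_mul]
        ring_nf
      rw [he1]
      have h4 : (0:ℝ) < (2:ℝ) ^ (3 * l) := by positivity
      rw [zpow_neg, inv_le_iff_one_le_mul₀ h4]
      exact h2
    exact (pow_le_pow_iff_left₀ (by positivity) hθ0.le (by norm_num)).1 h3
  -- fiber contribution bound
  have hfib : ∀ l ∈ T.image L,
      ∑ e ∈ T.filter (fun e => L e = l), ν e * ρ e ^ 4 ≤ θ ^ 3 * m ^ 2 * (2:ℝ) ^ (-l) := by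
    intro l _
    have hc4 : (s / 2 ^ l) ^ (4:ℕ) = m ^ 2 * (2:ℝ) ^ (-(4 * l)) := by
      rw [div_pow, ← zpow_natCast ((2:ℝ) ^ l), ← zpow_mul]
      have : s ^ (4:ℕ) = m ^ 2 := by
        rw [show (4:ℕ) = 2 * 2 from rfl, pow_mul, hs2]
      rw [this, zpow_neg, div_eq_mul_inv]
      ring_nf
    calc ∑ e ∈ T.filter (fun e => L e = l), ν e * ρ e ^ 4
        ≤ ∑ e ∈ T.filter (fun e => L e = l), ν e * (m ^ 2 * (2:ℝ) ^ (-(4 * l))) := by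
          refine Finset.sum_le_sum fun e he => ?_
          have hmem := hsub l he
          have hub := (Finset.mem_filter.1 hmem).2.2
          have : ρ e ^ 4 ≤ (s / 2 ^ l) ^ (4:ℕ) :=
            pow_le_pow_left₀ (hρ e) hub 4
          rw [hc4] at this
          exact mul_le_mul_of_nonneg_left this (hν0 e)
      _ = (m ^ 2 * (2:ℝ) ^ (-(4 * l))) * ∑ e ∈ T.filter (fun e => L e = l), ν e := by
          rw [Finset.mul_sum]; exact Finset.sum_congr rfl fun e _ => by ring
      _ ≤ (m ^ 2 * (2:ℝ) ^ (-(4 * l))) * (θ ^ 3 * (2:ℝ) ^ (3 * l)) := by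
          refine mul_le_mul_of_nonneg_left ?_ (by positivity)
          calc ∑ e ∈ T.filter (fun e => L e = l), ν e
              ≤ ∑ e ∈ univ.filter
                  (fun e => s / 2 ^ (l + 1) < ρ e ∧ ρ e ≤ s / 2 ^ l), ν e :=
                Finset.sum_le_sum_of_subset_of_nonneg (hsub l) (fun e _ _ => hν0 e)
            _ ≤ ((⌊θ ^ 3 * (2:ℝ) ^ (3*l)⌋ : ℤ) : ℝ) := hsmooth l
            _ ≤ θ ^ 3 * (2:ℝ) ^ (3 * l) := Int.floor_le _
      _ = θ ^ 3 * m ^ 2 * (2:ℝ) ^ (-l) := by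
          have e1 : (2:ℝ) ^ (-(4*l)) = (2:ℝ) ^ (-l) * (2:ℝ) ^ (-(3*l)) := by
            rw [← zpow_add₀ (by norm_num : (2:ℝ) ≠ 0)]; ring_nf
          have e2 : (2:ℝ) ^ (-(3*l)) * (2:ℝ) ^ (3*l) = 1 := by
            rw [← zpow_add₀ (by norm_num : (2:ℝ) ≠ 0)]; simp
          calc m ^ 2 * (2:ℝ) ^ (-(4 * l)) * (θ ^ 3 * (2:ℝ) ^ (3 * l))
              = θ ^ 3 * m ^ 2 * (2:ℝ) ^ (-l) * ((2:ℝ) ^ (-(3*l)) * (2:ℝ) ^ (3*l)) := by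
                rw [e1]; ring
            _ = θ ^ 3 * m ^ 2 * (2:ℝ) ^ (-l) := by rw [e2]; ring
  -- total sum over T
  have htotal : (∑ e, ν e * ρ e ^ 4) = ∑ e ∈ T, ν e * ρ e ^ 4 := by
    refine (Finset.sum_subset (Finset.subset_univ T) fun e _ he => ?_).symm
    have : ρ e = 0 := by
      by_contra h
      exact he (Finset.mem_filter.2 ⟨Finset.mem_univ _, lt_of_le_of_ne (hρ e) (Ne.symm h)⟩)
    rw [this]; ring
  rw [htotal, ← Finset.sum_fiberwise_of_maps_to
      (fun e he => Finset.mem_image_of_mem L he) (fun e => ν e * ρ e ^ 4)]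
  rcases (T.image L).eq_empty_or_nonempty with hS | hS
  · rw [hS]; simp; positivity
  · set l₀ := (T.image L).min' hS with hl₀
    have hl₀θ : (2:ℝ) ^ (-l₀) ≤ θ := hkey l₀ ((T.image L).min'_mem hS)
    calc ∑ l ∈ T.image L, ∑ e ∈ T.filter (fun e => L e = l), ν e * ρ e ^ 4
        ≤ ∑ l ∈ T.image L, θ ^ 3 * m ^ 2 * (2:ℝ) ^ (-l) := Finset.sum_le_sum hfib
      _ = θ ^ 3 * m ^ 2 * ∑ l ∈ T.image L, (2:ℝ) ^ (-l) := by rw [Finset.mul_sum]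
      _ ≤ θ ^ 3 * m ^ 2 * (2 * (2:ℝ) ^ (-l₀)) := by
          refine mul_le_mul_of_nonneg_left ?_ (by positivity)
          exact sum_zpow_neg_le _ l₀ fun l hl => (T.image L).min'_le l hl
      _ ≤ θ ^ 3 * m ^ 2 * (2 * θ) := by
          refine mul_le_mul_of_nonneg_left (by linarith) (by positivity)
      _ = 2 * θ ^ 4 * m ^ 2 := by ring
      _ ≤ 4 * θ ^ 4 * m ^ 2 := by nlinarith [sq_nonneg m, pow_pos hθ0 4]
end

section
/- (α-stretching preserves centering.) Let E be a finite index type and f, s, ν : E → ℝ with f_e > 0, s_e > 0, ν_e ≥ 1 for all e, and suppose (f, s, ν) is γ-centered for some 0 ≤ γ ≤ 1/2. Fix an index e₀ and α ≥ 0, and set β := α·f_{e₀} s_{e₀}/(ν_{e₀}·μ̂(f,s,ν)). Define s' by s'_{e₀} := (1 + α)·s_{e₀} and s'_e := s_e for e ≠ e₀, and ν' by ν'_{e₀} := (1 + β)·ν_{e₀} and ν'_e := ν_e for e ≠ e₀. Then: (i) μ̂(f, s', ν') = μ̂(f, s, ν); (ii) (f, s', ν') is γ-centered; (iii) (1 −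 γ)·α ≤ β ≤ (1 + γ)·α. -/
open Finset

/-- Lemma 6.3 (α-stretching preserves centering): stretching a single coordinate `e₀`
by `(1+α)` in `s` and by `(1+β)` in `ν`, with `β = α f_{e₀} s_{e₀}/(ν_{e₀} μ̂(f,s,ν))`,
leaves `μ̂` unchanged, preserves `γ`-centering, and satisfies
`(1−γ)α ≤ β ≤ (1+γ)α`. -/
theorem alpha_stretching_preserves_centering
    {E : Type*} [Fintype E] [Nonempty E] [DecidableEq E]
    (f s ν : E → ℝ) (hf : ∀ e, 0 < f e) (hs : ∀ e, 0 < s e) (hν : ∀ e, 1 ≤ ν e)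
    (γ : ℝ) (hγ0 : 0 ≤ γ) (hγ1 : γ ≤ 1 / 2) (hcent : IsCentered f s ν γ)
    (e₀ : E) (α : ℝ) (hα : 0 ≤ α)
    (β : ℝ) (hβ : β = α * (f e₀ * s e₀) / (ν e₀ * muhat f s ν))
    (s' ν' : E → ℝ)
    (hs' : s' = Function.update s e₀ ((1 + α) * s e₀))
    (hν' : ν' = Function.update ν e₀ ((1 + β) * ν e₀)) :
    muhat f s' ν' = muhat f s ν ∧
    IsCentered f s' ν' γ ∧
    ((1 - γ) * α ≤ β ∧ β ≤ (1 + γ) * α) := by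
  classical
  have hD : (0:ℝ) < ∑ e, ν e :=
    Finset.sum_pos (fun e _ => lt_of_lt_of_le one_pos (hν e)) Finset.univ_nonempty
  have hN : (0:ℝ) < ∑ e, f e * s e :=
    Finset.sum_pos (fun e _ => mul_pos (hf e) (hs e)) Finset.univ_nonempty
  have hμpos : 0 < muhat f s ν := div_pos hN hD
  set μ := muhat f s ν with hμ
  have hν0 : (0:ℝ) < ν e₀ := lt_of_lt_of_le one_pos (hν e₀)
  have hβnn : 0 ≤ β := by
    rw [hβ]
    exact div_nonneg (mul_nonneg hα (mul_pos (hf e₀) (hs e₀)).le)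
      (mul_nonneg hν0.le hμpos.le)
  have h1β : (0:ℝ) < 1 + β := by linarith
  have hβμ : β * (ν e₀ * μ) = α * (f e₀ * s e₀) := by
    rw [hβ]; field_simp
  have hμD : μ * (∑ e, ν e) = ∑ e, f e * s e := by
    rw [hμ]; unfold muhat; field_simp
  have hSsum : ∑ e, f e * s' e = (∑ e, f e * s e) + α * (f e₀ * s e₀) := by
    have h : ∀ e, f e * s' e = f e * s e + (if e = e₀ then α * (f e₀ * s e₀) else 0) := by
      intro e; by_cases h : e = e₀
      · rw [h, hs']; simp [Function.update_self]; ring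
      · rw [hs']; simp [Function.update_of_ne h, h]
    simp only [h, Finset.sum_add_distrib, Finset.sum_ite_eq' Finset.univ, Finset.mem_univ,
      if_true]
  have hNsum : ∑ e, ν' e = (∑ e, ν e) + β * ν e₀ := by
    have h : ∀ e, ν' e = ν e + (if e = e₀ then β * ν e₀ else 0) := by
      intro e; by_cases h : e = e₀
      · rw [h, hν']; simp [Function.update_self]; ring
      · rw [hν']; simp [Function.update_of_ne h, h]
    simp only [h, Finset.sum_add_distrib, Finset.sum_ite_eq' Finset.univ, Finset.mem_univ,
      if_true]
  have hD' : (0:ℝ) < (∑ e, ν e) + β * ν e₀ := by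
    have : 0 ≤ β * ν e₀ := mul_nonneg hβnn hν0.le
    linarith
  have hmu' : muhat f s' ν' = μ := by
    unfold muhat
    rw [hSsum, hNsum, div_eq_iff hD'.ne']
    linear_combination -hμD - hβμ
  have hxkey : f e₀ * ((1 + α) * s e₀) / ((1 + β) * ν e₀) - μ
      = (f e₀ * s e₀ / ν e₀ - μ) / (1 + β) := by
    field_simp
    linear_combination -hβμ
  have hterm : ∀ e, ν' e * (f e * s' e / ν' e - μ) ^ 2 ≤ ν e * (f e * s e / ν e - μ) ^ 2 := by
    intro e
    by_cases h : e = e₀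
    · rw [h, hs', hν']
      simp only [Function.update_self]
      rw [hxkey, div_pow]
      have hrw : (1 + β) * ν e₀ * ((f e₀ * s e₀ / ν e₀ - μ) ^ 2 / (1 + β) ^ 2)
          = ν e₀ * (f e₀ * s e₀ / ν e₀ - μ) ^ 2 / (1 + β) := by
        field_simp
      rw [hrw]
      exact div_le_self (mul_nonneg hν0.le (sq_nonneg _)) (by linarith)
    · rw [hs', hν']
      simp [Function.update_of_ne h]
  have hcent' : IsCentered f s' ν' γ := by
    unfold IsCentered
    rw [hmu']
    calc ∑ e, ν' e * (f e * s' e / ν' e - μ) ^ 2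
        ≤ ∑ e, ν e * (f e * s e / ν e - μ) ^ 2 :=
          Finset.sum_le_sum (fun e _ => hterm e)
      _ ≤ γ ^ 2 * μ ^ 2 := hcent
  have hsingle : ν e₀ * (f e₀ * s e₀ / ν e₀ - μ) ^ 2 ≤ γ ^ 2 * μ ^ 2 :=
    le_trans (Finset.single_le_sum (f := fun e => ν e * (f e * s e / ν e - μ) ^ 2)
      (fun e _ => mul_nonneg (le_trans zero_le_one (hν e)) (sq_nonneg _))
      (Finset.mem_univ e₀)) hcent
  have hsq : (f e₀ * s e₀ / ν e₀ - μ) ^ 2 ≤ (γ * μ) ^ 2 := by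
    nlinarith [sq_nonneg (f e₀ * s e₀ / ν e₀ - μ), hν e₀]
  have hγμ : 0 ≤ γ * μ := mul_nonneg hγ0 hμpos.le
  have hx_ub : f e₀ * s e₀ / ν e₀ ≤ (1 + γ) * μ := by nlinarith [hsq, hγμ]
  have hx_lb : (1 - γ) * μ ≤ f e₀ * s e₀ / ν e₀ := by nlinarith [hsq, hγμ]
  have hβx : β * μ = α * (f e₀ * s e₀ / ν e₀) := by
    field_simp
    linear_combination hβμ
  clear_value μ
  refine ⟨hmu', hcent', ?_, ?_⟩
  · have h2 : (1 - γ) * α * μ ≤ β * μ := by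
      have he : (1 - γ) * α * μ = α * ((1 - γ) * μ) := by ring
      rw [he, hβx]
      exact mul_le_mul_of_nonneg_left hx_lb hα
    exact le_of_mul_le_mul_right h2 hμpos
  · have h2 : β * μ ≤ (1 + γ) * α * μ := by
      have he : (1 + γ) * α * μ = α * ((1 + γ) * μ) := by ring
      rw [he, hβx]
      exact mul_le_mul_of_nonneg_left hx_ub hα
    exact le_of_mul_le_mul_right h2 hμpos
end

section
/- (Energy increase from doubling resistances on a high-contribution set.) Let f̂ be a σ-flow induced by vertex potentials with respect to resistances r, with energy E := E_r(f̂) > 0. Let S be a set of arcs and 0 ≤ c ≤ 1 with Σ_{e∈S} r_e f̂_e² ≥ c·E. Define r' by r'_e := 2 r_e for e ∈ S and r'_e := r_e otherwise, and let f̂' be a σ-flow induced by vertex potentials with respect to r'. Then E_{r'}(f̂') ≥ E/(1 − c/2). -/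
open Finset

/-- Pairing a σ-flow with any potentials gives the demand-potential inner product. -/
lemma flow_pairing {V E : Type*} [Fintype V] [Fintype E] [DecidableEq V]
    (tail head : E → V) (σ : V → ℝ) (g : E → ℝ) (ψ : V → ℝ)
    (hg : IsFlow tail head σ g) :
    ∑ e, g e * (ψ (head e) - ψ (tail e)) = ∑ v, σ v * ψ v := by
  have h1 : ∀ v, σ v * ψ v
      = (∑ e ∈ univ.filter (fun e => head e = v), g e * ψ (head e))
        - (∑ e ∈ univ.filter (fun e => tail e = v), g e * ψ (tail e)) := by
    intro v
    rw [← hg v, sub_mul, Finset.sum_mul, Finset.sum_mul]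
    congr 1 <;> refine Finset.sum_congr rfl fun e he => ?_ <;>
      simp only [Finset.mem_filter] at he <;> rw [he.2]
  have h2 := Finset.sum_fiberwise univ head (fun e => g e * ψ (head e))
  have h3 := Finset.sum_fiberwise univ tail (fun e => g e * ψ (tail e))
  calc ∑ e, g e * (ψ (head e) - ψ (tail e))
      = (∑ e, g e * ψ (head e)) - ∑ e, g e * ψ (tail e) := by
        rw [← Finset.sum_sub_distrib]; exact Finset.sum_congr rfl fun e _ => by ring
    _ = (∑ v, ∑ e ∈ univ.filter (fun e => head e = v), g e * ψ (head e))
        - (∑ v, ∑ e ∈ univ.filter (fun e => tail e = v), g e * ψ (tail e)) := by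
        rw [h2, h3]
    _ = ∑ v, σ v * ψ v := by
        rw [← Finset.sum_sub_distrib]; exact Finset.sum_congr rfl fun v _ => (h1 v).symm

/-- Energy increase from doubling resistances on a set of arcs contributing at least a
`c`-fraction of the energy: the new electrical flow has energy at least `E/(1 − c/2)`. -/
theorem energy_increase_doubling
    {V E : Type*} [Fintype V] [Fintype E] [DecidableEq V] [DecidableEq E]
    (tail head : E → V) (σ : V → ℝ) (hσ : ∑ v, σ v = 0)
    (r : E → ℝ) (hr : ∀ e, 0 < r e)
    (fhat : E → ℝ) (φ : V → ℝ)
    (hflow : IsFlow tail head σ fhat)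
    (hind : ∀ e, fhat e = (φ (head e) - φ (tail e)) / r e)
    (hE : 0 < energy r fhat)
    (S : Finset E) (c : ℝ) (hc0 : 0 ≤ c) (hc1 : c ≤ 1)
    (hS : c * energy r fhat ≤ ∑ e ∈ S, r e * fhat e ^ 2)
    (r' : E → ℝ) (hr' : ∀ e, r' e = if e ∈ S then 2 * r e else r e)
    (fhat' : E → ℝ) (φ' : V → ℝ)
    (hflow' : IsFlow tail head σ fhat')
    (hind' : ∀ e, fhat' e = (φ' (head e) - φ' (tail e)) / r' e) :
    energy r fhat / (1 - c / 2) ≤ energy r' fhat' := by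
  have hr'pos : ∀ e, 0 < r' e := by
    intro e; rw [hr' e]; split <;> [linarith [hr e]; exact hr e]
  have hΔ : ∀ e, φ (head e) - φ (tail e) = r e * fhat e := by
    intro e
    have hre := (hr e).ne'
    rw [hind e]
    field_simp
  -- E = ∑ σ φ
  have hE1 : energy r fhat = ∑ v, σ v * φ v := by
    rw [← flow_pairing tail head σ fhat φ hflow]
    exact Finset.sum_congr rfl fun e _ => by rw [hΔ e]; ring
  -- pairing for the new flow against old potentials
  have hE2 : ∑ e, fhat' e * (φ (head e) - φ (tail e)) = energy r fhat := by
    rw [flow_pairing tail head σ fhat' φ hflow', hE1]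
  -- Cauchy–Schwarz
  have hCS := Finset.sum_mul_sq_le_sq_mul_sq Finset.univ
    (fun e => Real.sqrt (r' e) * fhat' e)
    (fun e => (φ (head e) - φ (tail e)) / Real.sqrt (r' e))
  have hsq : ∀ e, Real.sqrt (r' e) ≠ 0 := fun e =>
    ne_of_gt (Real.sqrt_pos.mpr (hr'pos e))
  have hL : ∑ e, (Real.sqrt (r' e) * fhat' e) *
      ((φ (head e) - φ (tail e)) / Real.sqrt (r' e))
      = energy r fhat := by
    rw [← hE2]
    refine Finset.sum_congr rfl fun e _ => ?_
    rw [div_eq_mul_inv,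
      show (Real.sqrt (r' e) * fhat' e) * ((φ (head e) - φ (tail e)) * (Real.sqrt (r' e))⁻¹)
        = fhat' e * (φ (head e) - φ (tail e)) * (Real.sqrt (r' e) * (Real.sqrt (r' e))⁻¹)
        from by ring,
      mul_inv_cancel₀ (hsq e), mul_one]
  have hF : ∑ e, (Real.sqrt (r' e) * fhat' e) ^ 2 = energy r' fhat' := by
    refine Finset.sum_congr rfl fun e _ => ?_
    rw [mul_pow, Real.sq_sqrt (hr'pos e).le]
  have hG : ∑ e, ((φ (head e) - φ (tail e)) / Real.sqrt (r' e)) ^ 2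
      = energy r fhat - (∑ e ∈ S, r e * fhat e ^ 2) / 2 := by
    have : ∀ e, ((φ (head e) - φ (tail e)) / Real.sqrt (r' e)) ^ 2
        = r e * fhat e ^ 2 - (if e ∈ S then (r e * fhat e ^ 2) / 2 else 0) := by
      intro e
      rw [div_pow, Real.sq_sqrt (hr'pos e).le, hΔ e, hr' e]
      split
      · rw [mul_pow]
        have h2 : (2 : ℝ) * r e ≠ 0 := ne_of_gt (by linarith [hr e])
        field_simp
        ring
      · rw [mul_pow]
        have : r e ≠ 0 := (hr e).ne'
        field_simp
        ring
    rw [Finset.sum_congr rfl fun e _ => this e, Finset.sum_sub_distrib]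
    congr 1
    rw [Finset.sum_ite_mem, Finset.univ_inter, Finset.sum_div]
  rw [hL, hF, hG] at hCS
  -- combine
  have hEnn : 0 ≤ energy r' fhat' :=
    Finset.sum_nonneg fun e _ => mul_nonneg (hr'pos e).le (sq_nonneg _)
  have h1mc : (0 : ℝ) < 1 - c / 2 := by linarith
  have hDle : energy r fhat - (∑ e ∈ S, r e * fhat e ^ 2) / 2
      ≤ (1 - c / 2) * energy r fhat := by linarith
  have := mul_le_mul_of_nonneg_left hDle hEnn
  rw [div_le_iff₀ h1mc]
  nlinarith [hCS, this, hE, hEnn]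
end

section
/- (Energy stability under multiplicative resistance perturbations.) Let f̂ be a σ-flow induced by vertex potentials with respect to resistances r, with energy E := E_r(f̂) > 0. Let λ : E → ℝ with λ_e ≥ 0 for all arcs, let r' be resistances with r'_e ≥ r_e/(1 + λ_e) for every arc e, and let f̂' be a σ-flow induced by vertex potentials with respect to r'. Then E_{r'}(f̂') ≥ E/(1 + Σ_e λ_e·r_e f̂_e²/E). -/
open Finset

lemma orth {V E : Type*} [Fintype V] [Fintype E] [DecidableEq V]
    (tail head : E → V) (σ : V → ℝ) (r : E → ℝ) (hr : ∀ e, r e ≠ 0)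
    (f : E → ℝ) (φ : V → ℝ)
    (hind : ∀ e, f e = (φ (head e) - φ (tail e)) / r e)
    (g : E → ℝ) (hf : IsFlow tail head σ f) (hg : IsFlow tail head σ g) :
    ∑ e, r e * f e * g e = ∑ e, r e * f e * f e := by
  have key : ∀ e, r e * f e = φ (head e) - φ (tail e) := by
    intro e; rw [hind e, mul_comm, div_mul_cancel₀ _ (hr e)]
  have h0 : ∑ e, (φ (head e) - φ (tail e)) * (g e - f e) = 0 := by
    have expand : ∀ e, (φ (head e) - φ (tail e)) * (g e - f e)
        = φ (head e) * (g e - f e) - φ (tail e) * (g e - f e) := by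
      intro e; ring
    rw [Finset.sum_congr rfl (fun e _ => expand e), Finset.sum_sub_distrib]
    have hh : ∑ e, φ (head e) * (g e - f e)
        = ∑ v, φ v * ((∑ e ∈ univ.filter (fun e => head e = v), g e)
            - ∑ e ∈ univ.filter (fun e => head e = v), f e) := by
      rw [← Finset.sum_fiberwise_of_maps_to (fun e _ => Finset.mem_univ (head e)) (fun e => φ (head e) * (g e - f e))]
      refine Finset.sum_congr rfl fun v _ => ?_
      rw [mul_sub, Finset.mul_sum, Finset.mul_sum, ← Finset.sum_sub_distrib]
      refine Finset.sum_congr rfl fun e he => ?_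
      simp only [mem_filter] at he
      rw [he.2]; ring
    have ht : ∑ e, φ (tail e) * (g e - f e)
        = ∑ v, φ v * ((∑ e ∈ univ.filter (fun e => tail e = v), g e)
            - ∑ e ∈ univ.filter (fun e => tail e = v), f e) := by
      rw [← Finset.sum_fiberwise_of_maps_to (fun e _ => Finset.mem_univ (tail e)) (fun e => φ (tail e) * (g e - f e))]
      refine Finset.sum_congr rfl fun v _ => ?_
      rw [mul_sub, Finset.mul_sum, Finset.mul_sum, ← Finset.sum_sub_distrib]
      refine Finset.sum_congr rfl fun e he => ?_
      simp only [mem_filter] at he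
      rw [he.2]; ring
    rw [hh, ht, ← Finset.sum_sub_distrib]
    refine Finset.sum_eq_zero fun v _ => ?_
    have := hf v; have := hg v
    have hz : ((∑ e ∈ univ.filter (fun e => head e = v), g e)
            - ∑ e ∈ univ.filter (fun e => head e = v), f e)
          - ((∑ e ∈ univ.filter (fun e => tail e = v), g e)
            - ∑ e ∈ univ.filter (fun e => tail e = v), f e) = 0 := by
      have h1 := hf v; have h2 := hg v; linarith
    have hAB : ((∑ e ∈ univ.filter (fun e => head e = v), g e)
            - ∑ e ∈ univ.filter (fun e => head e = v), f e)
          = ((∑ e ∈ univ.filter (fun e => tail e = v), g e)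
            - ∑ e ∈ univ.filter (fun e => tail e = v), f e) := by linarith
    rw [hAB, sub_self]
  have hsum : ∑ e, r e * f e * (g e - f e) = 0 := by
    rw [Finset.sum_congr rfl (fun e _ => by rw [key e])]; exact h0
  calc ∑ e, r e * f e * g e
      = ∑ e, (r e * f e * f e + r e * f e * (g e - f e)) :=
        Finset.sum_congr rfl (fun e _ => by ring)
    _ = (∑ e, r e * f e * f e) + ∑ e, r e * f e * (g e - f e) :=
        Finset.sum_add_distrib
    _ = ∑ e, r e * f e * f e := by rw [hsum, add_zero]

/-- Energy stability under multiplicative resistance perturbations: if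
`r'_e ≥ r_e/(1 + λ_e)` with `λ ≥ 0`, then the new electrical flow has energy at least
`E/(1 + Σ λ_e r_e f̂_e²/E)`. -/
theorem energy_stability_perturbation
    {V E : Type*} [Fintype V] [Fintype E] [DecidableEq V]
    (tail head : E → V) (σ : V → ℝ) (hσ : ∑ v, σ v = 0)
    (r : E → ℝ) (hr : ∀ e, 0 < r e)
    (fhat : E → ℝ) (φ : V → ℝ)
    (hflow : IsFlow tail head σ fhat)
    (hind : ∀ e, fhat e = (φ (head e) - φ (tail e)) / r e)
    (hE : 0 < energy r fhat)
    (lam : E → ℝ) (hlam : ∀ e, 0 ≤ lam e)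
    (r' : E → ℝ) (hr'pos : ∀ e, 0 < r' e)
    (hr' : ∀ e, r e / (1 + lam e) ≤ r' e)
    (fhat' : E → ℝ) (φ' : V → ℝ)
    (hflow' : IsFlow tail head σ fhat')
    (hind' : ∀ e, fhat' e = (φ' (head e) - φ' (tail e)) / r' e) :
    energy r fhat / (1 + ∑ e, lam e * (r e * fhat e ^ 2) / energy r fhat)
      ≤ energy r' fhat' := by
  set E0 := energy r fhat with hE0
  set E' := energy r' fhat' with hE'
  set S := ∑ e, lam e * (r e * fhat e ^ 2) with hSdef
  -- Step 1: E0 = ∑ r e * fhat e * fhat' e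
  have h1 : ∑ e, r e * fhat e * fhat' e = E0 := by
    rw [orth tail head σ r (fun e => (hr e).ne') fhat φ hind fhat' hflow hflow']
    rw [hE0]; unfold energy
    exact Finset.sum_congr rfl fun e _ => by ring
  -- Step 2: Cauchy-Schwarz
  set a : E → ℝ := fun e => r e * fhat e / Real.sqrt (r' e) with ha
  set b : E → ℝ := fun e => Real.sqrt (r' e) * fhat' e with hb
  have hsq : ∀ e, Real.sqrt (r' e) ^ 2 = r' e := fun e => Real.sq_sqrt (hr'pos e).le
  have hsne : ∀ e, Real.sqrt (r' e) ≠ 0 := fun e =>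
    (Real.sqrt_pos.mpr (hr'pos e)).ne'
  have hab : ∀ e, a e * b e = r e * fhat e * fhat' e := by
    intro e; rw [ha, hb]; field_simp [hsne e]
  have cs := Finset.sum_mul_sq_le_sq_mul_sq univ a b
  have hasq : ∀ e, a e ^ 2 = (r e * fhat e) ^ 2 / r' e := by
    intro e; rw [ha]
    rw [div_pow, hsq e]
  have hbsq : ∀ e, b e ^ 2 = r' e * fhat' e ^ 2 := by
    intro e; rw [hb, mul_pow, hsq e]
  have per : ∀ e, (r e * fhat e) ^ 2 / r' e ≤ (1 + lam e) * (r e * fhat e ^ 2) := by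
    intro e
    have honel : 0 < 1 + lam e := by linarith [hlam e]
    have hrle : r e ≤ r' e * (1 + lam e) := by
      have h := hr' e; rw [div_le_iff₀ honel] at h; linarith
    rw [div_le_iff₀ (hr'pos e)]
    have hrw : (r e * fhat e) ^ 2 = r e * (r e * fhat e ^ 2) := by ring
    rw [hrw]
    calc r e * (r e * fhat e ^ 2)
        ≤ (r' e * (1 + lam e)) * (r e * fhat e ^ 2) :=
          mul_le_mul_of_nonneg_right hrle (mul_nonneg (hr e).le (sq_nonneg _))
      _ = (1 + lam e) * (r e * fhat e ^ 2) * r' e := by ring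
  have hA : ∑ e, a e ^ 2 ≤ E0 + S := by
    calc ∑ e, a e ^ 2 = ∑ e, (r e * fhat e) ^ 2 / r' e :=
          Finset.sum_congr rfl fun e _ => hasq e
      _ ≤ ∑ e, (1 + lam e) * (r e * fhat e ^ 2) :=
          Finset.sum_le_sum fun e _ => per e
      _ = E0 + S := by
          rw [hE0, hSdef]; unfold energy
          rw [← Finset.sum_add_distrib]
          exact Finset.sum_congr rfl fun e _ => by ring
  have hB : ∑ e, b e ^ 2 = E' := by
    rw [hE']; unfold energy
    exact Finset.sum_congr rfl fun e _ => hbsq e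
  have hE'nn : 0 ≤ E' := by
    rw [hE']; unfold energy
    exact Finset.sum_nonneg fun e _ => mul_nonneg (hr'pos e).le (sq_nonneg _)
  have csfinal : E0 ^ 2 ≤ (E0 + S) * E' := by
    have habsum : ∑ e, a e * b e = E0 := by
      rw [Finset.sum_congr rfl fun e _ => hab e]; exact h1
    calc E0 ^ 2 = (∑ e, a e * b e) ^ 2 := by rw [habsum]
      _ ≤ (∑ e, a e ^ 2) * ∑ e, b e ^ 2 := cs
      _ ≤ (E0 + S) * E' := by
          rw [hB]
          exact mul_le_mul_of_nonneg_right hA hE'nn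
  have hSnn : 0 ≤ S := Finset.sum_nonneg fun e _ =>
    mul_nonneg (hlam e) (mul_nonneg (hr e).le (sq_nonneg _))
  have hden : (1 : ℝ) + ∑ e, lam e * (r e * fhat e ^ 2) / E0 = (E0 + S) / E0 := by
    rw [← Finset.sum_div, ← hSdef]
    field_simp
  rw [hden]
  have hpos : (0:ℝ) < E0 + S := by linarith
  have heq : E0 / ((E0 + S) / E0) = E0 ^ 2 / (E0 + S) := by
    rw [div_div_eq_mul_div]; ring_nf
  rw [heq, div_le_iff₀ hpos, mul_comm]
  exact csfinal
end

section
/- (Feasible flow dominates electrical flow across every potential level cut.) Let f̂ be a σ-flow induced by vertex potentials φ with respect to resistances r, and let f be a σ-flow (with the same demand vector σ) satisfying f_e ≥ 0 for every arc e. For a real number x with x ≠ φ_v for every vertex v, let E_x be the set of arcs e such that min(φ(tail e), φ(head e)) < x < max(φ(tail e), φ(head e)). Then Σ_{e∈E_x} f_e ≥ Σ_{e∈E_x} |f̂_e|. -/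
open Finset

/-- Lemma 6.18: a nonnegative feasible `σ`-flow dominates the electrical `σ`-flow across
every potential level cut: for any `x` avoiding the potentials of all vertices,
`Σ_{e ∈ E_x} f_e ≥ Σ_{e ∈ E_x} |f̂_e|`, where `E_x` is the set of arcs whose endpoints'
potentials straddle `x`. -/
theorem feasible_dominates_electrical_on_cuts
    {V E : Type*} [Fintype V] [Fintype E] [DecidableEq V]
    (tail head : E → V) (σ : V → ℝ) (hσ : ∑ v, σ v = 0)
    (r : E → ℝ) (hr : ∀ e, 0 < r e)
    (fhat : E → ℝ) (φ : V → ℝ)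
    (hflowhat : IsFlow tail head σ fhat)
    (hind : ∀ e, fhat e = (φ (head e) - φ (tail e)) / r e)
    (f : E → ℝ) (hflow : IsFlow tail head σ f) (hfpos : ∀ e, 0 ≤ f e)
    (x : ℝ) (hx : ∀ v, φ v ≠ x) :
    (∑ e ∈ univ.filter (fun e =>
        min (φ (tail e)) (φ (head e)) < x ∧ x < max (φ (tail e)) (φ (head e))), |fhat e|)
      ≤ ∑ e ∈ univ.filter (fun e =>
        min (φ (tail e)) (φ (head e)) < x ∧ x < max (φ (tail e)) (φ (head e))), f e := by
  classical
  have hnl : ∀ v, ¬ φ v < x ↔ x < φ v := fun v =>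
    ⟨fun h => lt_of_le_of_ne (not_lt.1 h) (hx v).symm, fun h => asymm h⟩
  set S : Finset V := univ.filter (fun v => φ v < x) with hS
  set O : Finset E := univ.filter (fun e => φ (tail e) < x ∧ x < φ (head e)) with hO
  set I : Finset E := univ.filter (fun e => φ (head e) < x ∧ x < φ (tail e)) with hI
  -- cut identity for any σ-flow
  have cut : ∀ g : E → ℝ, IsFlow tail head σ g →
      (∑ e ∈ I, g e) - (∑ e ∈ O, g e) = ∑ v ∈ S, σ v := by
    intro g hg
    have h1 : ∑ v ∈ S, σ v =
        (∑ e ∈ univ.filter (fun e => φ (head e) < x), g e)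
        - (∑ e ∈ univ.filter (fun e => φ (tail e) < x), g e) := by
      calc ∑ v ∈ S, σ v
          = ∑ v ∈ S, ((∑ e ∈ univ.filter (fun e => head e = v), g e)
              - (∑ e ∈ univ.filter (fun e => tail e = v), g e)) :=
            Finset.sum_congr rfl fun v _ => (hg v).symm
        _ = (∑ v ∈ S, ∑ e ∈ univ.filter (fun e => head e = v), g e)
            - (∑ v ∈ S, ∑ e ∈ univ.filter (fun e => tail e = v), g e) :=
            Finset.sum_sub_distrib _ _
        _ = _ := by
            rw [Finset.sum_fiberwise_eq_sum_filter univ S head g,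
              Finset.sum_fiberwise_eq_sum_filter univ S tail g]
            simp only [hS, Finset.mem_filter, Finset.mem_univ, true_and]
    have h2 : ∑ e ∈ univ.filter (fun e => φ (head e) < x), g e
        = (∑ e ∈ univ.filter (fun e => φ (head e) < x ∧ φ (tail e) < x), g e)
          + ∑ e ∈ I, g e := by
      rw [hI, ← Finset.sum_filter_add_sum_filter_not
        (univ.filter (fun e => φ (head e) < x)) (fun e => φ (tail e) < x) g,
        Finset.filter_filter, Finset.filter_filter]
      simp only [hnl]
    have h3 : ∑ e ∈ univ.filter (fun e => φ (tail e) < x), g e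
        = (∑ e ∈ univ.filter (fun e => φ (head e) < x ∧ φ (tail e) < x), g e)
          + ∑ e ∈ O, g e := by
      rw [hO, ← Finset.sum_filter_add_sum_filter_not
        (univ.filter (fun e => φ (tail e) < x)) (fun e => φ (head e) < x) g,
        Finset.filter_filter, Finset.filter_filter]
      simp only [hnl]
      congr 1
      apply Finset.sum_congr _ (fun _ _ => rfl)
      apply Finset.filter_congr
      intro e _
      exact and_comm
    rw [h1, h2, h3]
    ring
  -- the level cut set splits as O ∪ I
  have hEx : univ.filter (fun e =>
      min (φ (tail e)) (φ (head e)) < x ∧ x < max (φ (tail e)) (φ (head e))) = O ∪ I := by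
    rw [hO, hI, ← Finset.filter_or]
    apply Finset.filter_congr
    intro e _
    simp only [min_lt_iff, lt_max_iff]
    constructor
    · rintro ⟨h1 | h1, h2 | h2⟩
      · exact absurd h2 (asymm h1)
      · exact Or.inl ⟨h1, h2⟩
      · exact Or.inr ⟨h1, h2⟩
      · exact absurd h2 (asymm h1)
    · rintro (⟨h1, h2⟩ | ⟨h1, h2⟩)
      · exact ⟨Or.inl h1, Or.inr h2⟩
      · exact ⟨Or.inr h1, Or.inl h2⟩
  have hdisj : Disjoint O I := by
    rw [hO, hI, Finset.disjoint_filter]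
    rintro e _ ⟨h1, h2⟩ ⟨h3, _⟩
    exact absurd h3 (asymm h2)
  -- signs of fhat on O and I
  have habsO : ∀ e ∈ O, |fhat e| = fhat e := by
    intro e he
    rw [hO, Finset.mem_filter] at he
    have : 0 ≤ fhat e := by
      rw [hind e]
      apply div_nonneg _ (hr e).le
      linarith [he.2.1, he.2.2]
    exact abs_of_nonneg this
  have habsI : ∀ e ∈ I, |fhat e| = -fhat e := by
    intro e he
    rw [hI, Finset.mem_filter] at he
    have : fhat e ≤ 0 := by
      rw [hind e]
      apply div_nonpos_of_nonpos_of_nonneg _ (hr e).le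
      linarith [he.2.1, he.2.2]
    exact abs_of_nonpos this
  rw [hEx, Finset.sum_union hdisj, Finset.sum_union hdisj,
    Finset.sum_congr rfl habsO, Finset.sum_congr rfl habsI, Finset.sum_neg_distrib]
  have c1 := cut fhat hflowhat
  have c2 := cut f hflow
  have hIf : 0 ≤ ∑ e ∈ I, f e := Finset.sum_nonneg fun e _ => hfpos e
  linarith
end

section
/- (Slack variables are bounded when short directed paths exist.) Let G be a finite directed graph with arc lengths ℓ : E → ℝ satisfying 0 ≤ ℓ_e ≤ 2 for every arc, and let y : V → ℝ be vertex potentials such that the slack s_e := ℓ_e − y(head e) + y(tail e) is nonnegative for every arc e. Suppose that for every ordered pair of vertices (u, w) there exists a directed path from u to w whose total length (the sum of ℓ over its arcs) is at most 4. Then s_e ≤ 6 for every arc e. -/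
open Finset

/-- A directed path from `u` to `w`: a nonempty sequence of arcs `e₁, …, e_k` with
`tail e₁ = u`, `head e_k = w`, and `head e_i = tail e_{i+1}` for consecutive arcs. -/
def IsDipath {V A : Type*} (tail head : A → V) (u w : V) (l : List A) : Prop :=
  l ≠ [] ∧ (∀ a ∈ l.head?, tail a = u) ∧ (∀ a ∈ l.getLast?, head a = w) ∧
    l.Chain' (fun a b => head a = tail b)

lemma slack_telescope {V A : Type*} (tail head : A → V) (ℓ : A → ℝ) (y : V → ℝ) :
    ∀ (l : List A) (u w : V), IsDipath tail head u w l →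
      (l.map (fun e => ℓ e - y (head e) + y (tail e))).sum
        = (l.map ℓ).sum - y w + y u := by
  intro l
  induction l with
  | nil => intro u w h; exact absurd rfl h.1
  | cons a t ih =>
    intro u w h
    obtain ⟨-, h1, h2, h3⟩ := h
    have hu : tail a = u := h1 a rfl
    cases t with
    | nil =>
      have hw : head a = w := h2 a rfl
      simp only [List.map_cons, List.map_nil, List.sum_cons, List.sum_nil, hu, hw]; ring
    | cons b t' =>
      have hab : head a = tail b := (List.isChain_cons_cons.mp h3).1
      have := ih (tail b) w ⟨by simp, by simp, by
        intro c hc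
        exact h2 c (by simpa [List.getLast?_cons_cons] using hc),
        (List.isChain_cons_cons.mp h3).2⟩
      simp only [List.map_cons, List.sum_cons] at this ⊢
      rw [this, hu, hab]; ring

/-- Lemma 6.4: if arc lengths satisfy `0 ≤ ℓ_e ≤ 2`, potentials `y` have nonnegative
slacks `s_e = ℓ_e − y(head e) + y(tail e)`, and every ordered pair of vertices is joined
by a directed path of total length at most `4`, then every slack is at most `6`. -/
theorem slack_bounded_of_short_paths
    {V A : Type*} [Fintype V] [Fintype A]
    (tail head : A → V) (ℓ : A → ℝ)
    (hℓ : ∀ a, 0 ≤ ℓ a ∧ ℓ a ≤ 2)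
    (y : V → ℝ)
    (hslack : ∀ a, 0 ≤ ℓ a - y (head a) + y (tail a))
    (hpath : ∀ u w : V, ∃ l : List A,
      IsDipath tail head u w l ∧ (l.map ℓ).sum ≤ 4) :
    ∀ a, ℓ a - y (head a) + y (tail a) ≤ 6 := by
  intro a
  obtain ⟨l, hl, hsum⟩ := hpath (head a) (tail a)
  have htel := slack_telescope tail head ℓ y l (head a) (tail a) hl
  have hnonneg : 0 ≤ (l.map (fun e => ℓ e - y (head e) + y (tail e))).sum := by
    apply List.sum_nonneg
    intro x hx
    obtain ⟨e, -, rfl⟩ := List.mem_map.mp hx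
    exact hslack e
  have hdiff : y (tail a) - y (head a) ≤ 4 := by
    rw [htel] at hnonneg; linarith
  linarith [(hℓ a).2]
end
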